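/- arXiv:2401.10505 — 3 statements merged into one kernel-verified Lean document; each statement's English description precedes it below -/
import Mathlib

section
/- Let κ ∈ ℝ, s₀ > 0 with c_{4κ}(s₀) > 0, and set η(s) = c_{4κ}(s)/c_{4κ}(s₀) where c_λ is defined by c_λ(t) = cos(√λ t) for λ > 0, c_λ(t) = 1 for λ = 0, c_λ(t) = cosh(√(-λ) t) for λ < 0. Then ∫_{-s₀}^{s₀} (3(η'(s))² - 12κ η(s)²) ds = -6 T_{4κ}(s₀), where T_{4κ} = -c_{4κ}'/c_{4κ}. -/
open Real Set intervalIntegral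

/-- `c_λ(t) = cos(√λ t)` for `λ > 0`, `1` for `λ = 0`, `cosh(√(-λ) t)` for `λ < 0`. -/
noncomputable def ck (l t : ℝ) : ℝ :=
  if 0 < l then Real.cos (Real.sqrt l * t)
  else if l = 0 then 1
  else Real.cosh (Real.sqrt (-l) * t)

/-- `T_λ = -c_λ'/c_λ`. -/
noncomputable def Tk (l t : ℝ) : ℝ := -(deriv (ck l) t) / ck l t

/-- With `η(s) = c_{4κ}(s)/c_{4κ}(s₀)`, one has
`∫_{-s₀}^{s₀} (3(η')² - 12κη²) = -6 T_{4κ}(s₀)`. -/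
theorem stmt9 (κ s₀ : ℝ) (hs₀ : 0 < s₀) (hpos : 0 < ck (4*κ) s₀)
    (η : ℝ → ℝ) (hη : ∀ s, η s = ck (4*κ) s / ck (4*κ) s₀) :
    ∫ s in (-s₀)..s₀, (3 * (deriv η s)^2 - 12*κ * (η s)^2) = -6 * Tk (4*κ) s₀ := by
  set l := 4*κ with hl
  have h12 : ∀ x y : ℝ, 3 * x^2 - 12*κ * y^2 = 3 * x^2 - 3*l * y^2 := by
    intro x y; rw [hl]; ring
  rcases lt_trichotomy l 0 with hneg | hzero | hposl
  · -- hyperbolic case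
    set r := Real.sqrt (-l) with hr
    have hr0 : 0 < r := Real.sqrt_pos.mpr (by linarith)
    have hrr : r * r = -l := Real.mul_self_sqrt (by linarith)
    have hck : ck l = fun t => Real.cosh (r * t) := by
      funext t; simp [ck, not_lt.mpr hneg.le, hneg.ne]; rfl
    have hC : (0:ℝ) < Real.cosh (r * s₀) := Real.cosh_pos _
    have hη' : η = fun s => Real.cosh (r * s) / Real.cosh (r * s₀) := by
      funext s; rw [hη, hck]
    have hdη : ∀ s, deriv (fun s => Real.cosh (r * s) / Real.cosh (r * s₀)) s
        = Real.sinh (r * s) * r / Real.cosh (r * s₀) := by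
      intro s
      have h := (((hasDerivAt_id s).const_mul r).cosh).div_const (Real.cosh (r * s₀))
      simpa using h.deriv
    have hF : ∀ s ∈ uIcc (-s₀) s₀, HasDerivAt
        (fun s => 3 * r * (Real.sinh (r*s) * Real.cosh (r*s)) / (Real.cosh (r*s₀))^2)
        (3 * (Real.sinh (r*s) * r / Real.cosh (r*s₀))^2
          - 3*l * (Real.cosh (r*s) / Real.cosh (r*s₀))^2) s := by
      intro s _
      have hs := ((hasDerivAt_id s).const_mul r).sinh
      have hc := ((hasDerivAt_id s).const_mul r).cosh
      have h := ((hs.mul hc).const_mul (3*r)).div_const ((Real.cosh (r*s₀))^2)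
      refine HasDerivAt.congr_deriv h ?_
      field_simp
      rw [show l = -(r*r) by linarith]
      simp only [id]
      ring
    have hint : IntervalIntegrable
        (fun s => 3 * (Real.sinh (r*s) * r / Real.cosh (r*s₀))^2
          - 3*l * (Real.cosh (r*s) / Real.cosh (r*s₀))^2)
        MeasureTheory.volume (-s₀) s₀ := by
      apply Continuous.intervalIntegrable; fun_prop
    have hi := intervalIntegral.integral_eq_sub_of_hasDerivAt hF hint
    simp only [h12, hη', hdη]
    rw [hi]
    have hdc : deriv (ck l) s₀ = Real.sinh (r * s₀) * r := by
      rw [hck]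
      have h := ((hasDerivAt_id s₀).const_mul r).cosh
      simpa using h.deriv
    rw [Tk, hdc, hck]
    simp only [mul_neg, Real.sinh_neg, Real.cosh_neg]
    field_simp
    ring
  · -- l = 0
    have hκ : κ = 0 := by linarith [hzero]
    have hck : ck l = fun _ => (1:ℝ) := by
      funext t; simp [ck, hzero]
    have hη' : η = fun _ => (1:ℝ) := by
      funext s; rw [hη, hck]; simp
    have hdη : ∀ s, deriv η s = 0 := by
      intro s; rw [hη']; simp
    have hT : Tk l s₀ = 0 := by
      rw [Tk, hck]; simp
    simp [hdη, hκ, hT]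
  · -- trigonometric case
    set r := Real.sqrt l with hr
    have hr0 : 0 < r := Real.sqrt_pos.mpr hposl
    have hrr : r * r = l := Real.mul_self_sqrt hposl.le
    have hck : ck l = fun t => Real.cos (r * t) := by
      funext t; simp [ck, hposl]; rfl
    have hC : (0:ℝ) < Real.cos (r * s₀) := by
      have := hpos; rwa [hck] at this
    have hη' : η = fun s => Real.cos (r * s) / Real.cos (r * s₀) := by
      funext s; rw [hη, hck]
    have hdη : ∀ s, deriv (fun s => Real.cos (r * s) / Real.cos (r * s₀)) s
        = -Real.sin (r * s) * r / Real.cos (r * s₀) := by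
      intro s
      have h := (((hasDerivAt_id s).const_mul r).cos).div_const (Real.cos (r * s₀))
      simpa using h.deriv
    have hF : ∀ s ∈ uIcc (-s₀) s₀, HasDerivAt
        (fun s => -3 * r * (Real.sin (r*s) * Real.cos (r*s)) / (Real.cos (r*s₀))^2)
        (3 * (-Real.sin (r*s) * r / Real.cos (r*s₀))^2
          - 3*l * (Real.cos (r*s) / Real.cos (r*s₀))^2) s := by
      intro s _
      have hs := ((hasDerivAt_id s).const_mul r).sin
      have hc := ((hasDerivAt_id s).const_mul r).cos
      have h := ((hs.mul hc).const_mul (-3*r)).div_const ((Real.cos (r*s₀))^2)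
      refine HasDerivAt.congr_deriv h ?_
      field_simp
      rw [show l = r*r from hrr.symm]
      simp only [id]
      ring
    have hint : IntervalIntegrable
        (fun s => 3 * (-Real.sin (r*s) * r / Real.cos (r*s₀))^2
          - 3*l * (Real.cos (r*s) / Real.cos (r*s₀))^2)
        MeasureTheory.volume (-s₀) s₀ := by
      apply Continuous.intervalIntegrable; fun_prop
    have hi := intervalIntegral.integral_eq_sub_of_hasDerivAt hF hint
    simp only [h12, hη', hdη]
    rw [hi]
    have hdc : deriv (ck l) s₀ = -Real.sin (r * s₀) * r := by
      rw [hck]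
      have h := ((hasDerivAt_id s₀).const_mul r).cos
      simpa using h.deriv
    rw [Tk, hdc, hck]
    simp only [mul_neg, Real.sin_neg, Real.cos_neg]
    field_simp
    ring
end

section
/- On a quaternionic Kähler manifold of quaternionic dimension m ≥ 2 with Ric = 4(m+2)κ g, the quaternionic sectional curvature is constant: for every tangent vector X, R(X, IX, X, IX) + R(X, JX, X, JX) + R(X, KX, X, KX) = 12κ |X|⁴. -/
open Real RealInnerProductSpace

private lemma expand_basis {n : ℕ} (u : EuclideanSpace ℝ (Fin n)) :
    u = ∑ j, u j • EuclideanSpace.single j 1 := by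
  ext k
  have : (∑ j, u j • EuclideanSpace.single j 1 : EuclideanSpace ℝ (Fin n)) k
      = ∑ j, (u j • (EuclideanSpace.single j 1 : EuclideanSpace ℝ (Fin n))) k :=
    by rw [WithLp.ofLp_sum, Finset.sum_apply]
  rw [this]
  simp [EuclideanSpace.single_apply]

private lemma sum_basis_change {n : ℕ} (B : EuclideanSpace ℝ (Fin n) → EuclideanSpace ℝ (Fin n) → ℝ)
    (h1 : ∀ u v w, B (u + v) w = B u w + B v w)
    (h2 : ∀ (r : ℝ) u w, B (r • u) w = r * B u w)
    (h3 : ∀ u v w, B u (v + w) = B u v + B u w)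
    (h4 : ∀ (r : ℝ) u v, B u (r • v) = r * B u v)
    (U : EuclideanSpace ℝ (Fin n) →ₗ[ℝ] EuclideanSpace ℝ (Fin n))
    (hU : ∀ u v, ⟪U u, U v⟫ = ⟪u, v⟫)
    (hUs : ∀ u v, ⟪U u, v⟫ = -⟪u, U v⟫) :
    ∑ i, B (U (EuclideanSpace.single i 1)) (U (EuclideanSpace.single i 1))
      = ∑ i, B (EuclideanSpace.single i 1) (EuclideanSpace.single i 1) := by
  set E : Fin n → EuclideanSpace ℝ (Fin n) := fun i => EuclideanSpace.single i 1 with hE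
  have hzero1 : ∀ w, B 0 w = 0 := by
    intro w
    have := h2 0 0 w
    simpa using this
  have hzero2 : ∀ u, B u 0 = 0 := by
    intro u
    have := h4 0 u 0
    simpa using this
  have hBsum1 : ∀ (s : Finset (Fin n)) (f : Fin n → ℝ) (w),
      B (∑ j ∈ s, f j • E j) w = ∑ j ∈ s, f j * B (E j) w := by
    intro s
    induction s using Finset.induction with
    | empty => intro f w; simpa using hzero1 w
    | @insert a s ha ih =>
      intro f w
      rw [Finset.sum_insert ha, Finset.sum_insert ha, h1, h2, ih]
  have hBsum2 : ∀ (s : Finset (Fin n)) (f : Fin n → ℝ) (u),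
      B u (∑ j ∈ s, f j • E j) = ∑ j ∈ s, f j * B u (E j) := by
    intro s
    induction s using Finset.induction with
    | empty => intro f u; simpa using hzero2 u
    | @insert a s ha ih =>
      intro f u
      rw [Finset.sum_insert ha, Finset.sum_insert ha, h3, h4, ih]
  have key : ∀ w : EuclideanSpace ℝ (Fin n),
      B w w = ∑ j, ∑ k, w j * (w k * B (E j) (E k)) := by
    intro w
    conv_lhs => rw [expand_basis w]
    rw [hBsum1]
    refine Finset.sum_congr rfl fun j _ => ?_
    rw [hBsum2, Finset.mul_sum]
  -- coordinates of U on basis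
  have hcoord : ∀ (i j : Fin n), (U (E i)) j = -((U (E j)) i) := by
    intro i j
    have e1 : ⟪U (E i), E j⟫ = (U (E i)) j := by
      simp [hE, EuclideanSpace.inner_single_right]
    have e2 : ⟪E i, U (E j)⟫ = (U (E j)) i := by
      simp [hE, EuclideanSpace.inner_single_left]
    have := hUs (E i) (E j)
    rw [e1, e2] at this
    exact this
  have horth : ∀ (j k : Fin n), (∑ i, (U (E i)) j * (U (E i)) k) = if j = k then 1 else 0 := by
    intro j k
    have : ∀ i, (U (E i)) j * (U (E i)) k = (U (E j)) i * (U (E k)) i := by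
      intro i
      rw [hcoord i j, hcoord i k]
      ring
    rw [Finset.sum_congr rfl fun i _ => this i]
    have hip : ⟪U (E j), U (E k)⟫ = ∑ i, (U (E j)) i * (U (E k)) i := by
      simp [PiLp.inner_apply]
      exact Finset.sum_congr rfl fun _ _ => mul_comm _ _
    rw [← hip, hU]
    simp [hE, EuclideanSpace.inner_single_left, EuclideanSpace.single_apply, eq_comm]
  calc ∑ i, B (U (E i)) (U (E i))
      = ∑ i, ∑ j, ∑ k, (U (E i)) j * ((U (E i)) k * B (E j) (E k)) := by
        exact Finset.sum_congr rfl fun i _ => key (U (E i))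
    _ = ∑ j, ∑ k, (∑ i, (U (E i)) j * (U (E i)) k) * B (E j) (E k) := by
        rw [Finset.sum_comm]
        refine Finset.sum_congr rfl fun j _ => ?_
        rw [Finset.sum_comm]
        refine Finset.sum_congr rfl fun k _ => ?_
        rw [Finset.sum_mul]
        exact Finset.sum_congr rfl fun i _ => by ring
    _ = ∑ j, B (E j) (E j) := by
        refine Finset.sum_congr rfl fun j _ => ?_
        rw [Finset.sum_congr rfl fun k _ => by rw [horth j k]]
        simp


set_option maxHeartbeats 2000000

/-- Pointwise model of a quaternionic Kähler manifold of quaternionic dimension `m ≥ 2`: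
the tangent space `V = ℝ^{4m}` carries orthogonal complex structures `I, J, K` with the
quaternion relations, and a curvature tensor `Rm` (with operator form `Rop`) having the
standard symmetries, whose operators commute with the `sp(1)`-span of `I, J, K` modulo
that span (the pointwise consequence of the bundle `V ⊂ End(TM)` being parallel).
If the manifold is Einstein with `Ric = 4(m+2)κ`, then the quaternionic sectional
curvature is constant: `R(X,IX,X,IX)+R(X,JX,X,JX)+R(X,KX,X,KX) = 12κ|X|⁴`. -/
theorem stmt13 (m : ℕ) (hm : 2 ≤ m) (κ : ℝ)
    (I J K : EuclideanSpace ℝ (Fin (4*m)) →ₗ[ℝ] EuclideanSpace ℝ (Fin (4*m)))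
    (hI2 : I ∘ₗ I = -LinearMap.id) (hJ2 : J ∘ₗ J = -LinearMap.id)
    (hK2 : K ∘ₗ K = -LinearMap.id)
    (hIJ : I ∘ₗ J = K) (hJI : J ∘ₗ I = -K)
    (hJK : J ∘ₗ K = I) (hKJ : K ∘ₗ J = -I)
    (hKI : K ∘ₗ I = J) (hIK : I ∘ₗ K = -J)
    (hgI : ∀ X Y, ⟪I X, I Y⟫ = ⟪X, Y⟫)
    (hgJ : ∀ X Y, ⟪J X, J Y⟫ = ⟪X, Y⟫)
    (hgK : ∀ X Y, ⟪K X, K Y⟫ = ⟪X, Y⟫)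
    (Rm : EuclideanSpace ℝ (Fin (4*m)) → EuclideanSpace ℝ (Fin (4*m)) →
      EuclideanSpace ℝ (Fin (4*m)) → EuclideanSpace ℝ (Fin (4*m)) → ℝ)
    (Rop : EuclideanSpace ℝ (Fin (4*m)) → EuclideanSpace ℝ (Fin (4*m)) →
      EuclideanSpace ℝ (Fin (4*m)) →ₗ[ℝ] EuclideanSpace ℝ (Fin (4*m)))
    (hRop : ∀ X Y Z W, ⟪Rop X Y Z, W⟫ = Rm X Y Z W)
    (hanti1 : ∀ X Y Z W, Rm X Y Z W = -Rm Y X Z W)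
    (hanti2 : ∀ X Y Z W, Rm X Y Z W = -Rm X Y W Z)
    (hpair : ∀ X Y Z W, Rm X Y Z W = Rm Z W X Y)
    (hbianchi : ∀ X Y Z W, Rm X Y Z W + Rm Y Z X W + Rm Z X Y W = 0)
    -- parallelness of the quaternionic bundle: curvature commutes with span{I,J,K}
    -- modulo span{I,J,K}
    (hsp1 : ∃ a b c : EuclideanSpace ℝ (Fin (4*m)) → EuclideanSpace ℝ (Fin (4*m)) → ℝ,
      ∀ X Y,
        Rop X Y ∘ₗ I - I ∘ₗ Rop X Y = c X Y • J - b X Y • K ∧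
        Rop X Y ∘ₗ J - J ∘ₗ Rop X Y = a X Y • K - c X Y • I ∧
        Rop X Y ∘ₗ K - K ∘ₗ Rop X Y = b X Y • I - a X Y • J)
    -- Einstein condition Ric = 4(m+2)κ
    (hEin : ∀ X, (∑ i : Fin (4*m), Rm X (EuclideanSpace.single i 1) X (EuclideanSpace.single i 1))
      = 4*((m:ℝ)+2)*κ * ‖X‖^2) :
    ∀ X, Rm X (I X) X (I X) + Rm X (J X) X (J X) + Rm X (K X) X (K X)
      = 12 * κ * ‖X‖^4 := by
  obtain ⟨a, b, c, hsp⟩ := hsp1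
  set E : Fin (4*m) → EuclideanSpace ℝ (Fin (4*m)) := fun i => EuclideanSpace.single i 1 with hE
  -- pointwise quaternion identities
  have hI2' : ∀ u, I (I u) = -u := fun u => by
    have := LinearMap.congr_fun hI2 u; simpa using this
  have hJ2' : ∀ u, J (J u) = -u := fun u => by
    have := LinearMap.congr_fun hJ2 u; simpa using this
  have hK2' : ∀ u, K (K u) = -u := fun u => by
    have := LinearMap.congr_fun hK2 u; simpa using this
  have hIJ' : ∀ u, I (J u) = K u := fun u => by
    have := LinearMap.congr_fun hIJ u; simpa using this
  have hJI' : ∀ u, J (I u) = -(K u) := fun u => by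
    have := LinearMap.congr_fun hJI u; simpa using this
  have hJK' : ∀ u, J (K u) = I u := fun u => by
    have := LinearMap.congr_fun hJK u; simpa using this
  have hKJ' : ∀ u, K (J u) = -(I u) := fun u => by
    have := LinearMap.congr_fun hKJ u; simpa using this
  have hKI' : ∀ u, K (I u) = J u := fun u => by
    have := LinearMap.congr_fun hKI u; simpa using this
  have hIK' : ∀ u, I (K u) = -(J u) := fun u => by
    have := LinearMap.congr_fun hIK u; simpa using this
  -- skew-adjointness
  have hIs : ∀ u v, ⟪I u, v⟫ = -⟪u, I v⟫ := by
    intro u v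
    have h1 : ⟪I u, I (I v)⟫ = ⟪u, I v⟫ := hgI u (I v)
    rw [hI2' v, inner_neg_right] at h1
    linarith
  have hJs : ∀ u v, ⟪J u, v⟫ = -⟪u, J v⟫ := by
    intro u v
    have h1 : ⟪J u, J (J v)⟫ = ⟪u, J v⟫ := hgJ u (J v)
    rw [hJ2' v, inner_neg_right] at h1
    linarith
  have hKs : ∀ u v, ⟪K u, v⟫ = -⟪u, K v⟫ := by
    intro u v
    have h1 : ⟪K u, K (K v)⟫ = ⟪u, K v⟫ := hgK u (K v)
    rw [hK2' v, inner_neg_right] at h1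
    linarith
  -- orthogonality facts
  have hoI : ∀ u, ⟪I u, u⟫ = 0 := by
    intro u
    have h := hIs u u
    have h2 := real_inner_comm u (I u)
    linarith
  have hoJ : ∀ u, ⟪J u, u⟫ = 0 := by
    intro u
    have h := hJs u u
    have h2 := real_inner_comm u (J u)
    linarith
  have hoK : ∀ u, ⟪K u, u⟫ = 0 := by
    intro u
    have h := hKs u u
    have h2 := real_inner_comm u (K u)
    linarith
  have houI : ∀ u, ⟪u, I u⟫ = 0 := by
    intro u; rw [real_inner_comm]; exact hoI u
  have houJ : ∀ u, ⟪u, J u⟫ = 0 := by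
    intro u; rw [real_inner_comm]; exact hoJ u
  have houK : ∀ u, ⟪u, K u⟫ = 0 := by
    intro u; rw [real_inner_comm]; exact hoK u
  have hoIJ : ∀ u, ⟪I u, J u⟫ = 0 := by
    intro u
    rw [hIs u (J u), hIJ' u]
    simp [houK, inner_neg_right]
  have hoJI : ∀ u, ⟪J u, I u⟫ = 0 := by
    intro u
    rw [hJs u (I u), hJI' u]
    simp [houK, inner_neg_right]
  have hoJK : ∀ u, ⟪J u, K u⟫ = 0 := by
    intro u
    rw [hJs u (K u), hJK' u]
    simp [houI, inner_neg_right]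
  have hoKJ : ∀ u, ⟪K u, J u⟫ = 0 := by
    intro u
    rw [hKs u (J u), hKJ' u]
    simp [houI, inner_neg_right]
  have hoKI : ∀ u, ⟪K u, I u⟫ = 0 := by
    intro u
    rw [hKs u (I u), hKI' u]
    simp [houJ, inner_neg_right]
  have hoIK : ∀ u, ⟪I u, K u⟫ = 0 := by
    intro u
    rw [hIs u (K u), hIK' u]
    simp [houJ, inner_neg_right]
  -- Rm basic form and multilinearity
  have hRm : ∀ X Y Z W, Rm X Y Z W = ⟪Rop X Y Z, W⟫ := fun X Y Z W => (hRop X Y Z W).symm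
  have Rm3add : ∀ X Y Z Z' W, Rm X Y (Z + Z') W = Rm X Y Z W + Rm X Y Z' W := by
    intro X Y Z Z' W
    rw [hRm X Y (Z+Z') W, hRm X Y Z W, hRm X Y Z' W, map_add, inner_add_left]
  have Rm3neg : ∀ X Y Z W, Rm X Y (-Z) W = -Rm X Y Z W := by
    intro X Y Z W
    rw [hRm X Y (-Z) W, hRm X Y Z W, map_neg, inner_neg_left]
  have Rm3smul : ∀ X Y (r : ℝ) Z W, Rm X Y (r • Z) W = r * Rm X Y Z W := by
    intro X Y r Z W
    rw [hRm X Y (r • Z) W, hRm X Y Z W, map_smul, real_inner_smul_left]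
  have Rm4add : ∀ X Y Z W W', Rm X Y Z (W + W') = Rm X Y Z W + Rm X Y Z W' := by
    intro X Y Z W W'
    rw [hRm X Y Z (W+W'), hRm X Y Z W, hRm X Y Z W', inner_add_right]
  have Rm4neg : ∀ X Y Z W, Rm X Y Z (-W) = -Rm X Y Z W := by
    intro X Y Z W
    rw [hRm X Y Z (-W), hRm X Y Z W, inner_neg_right]
  have Rm4smul : ∀ X Y Z (r : ℝ) W, Rm X Y Z (r • W) = r * Rm X Y Z W := by
    intro X Y Z r W
    rw [hRm X Y Z (r • W), hRm X Y Z W, real_inner_smul_right]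
  have Rm1add : ∀ u v Y Z W, Rm (u + v) Y Z W = Rm u Y Z W + Rm v Y Z W := by
    intro u v Y Z W
    rw [hpair (u+v) Y Z W, hpair u Y Z W, hpair v Y Z W]
    exact Rm3add Z W u v Y
  have Rm1neg : ∀ u Y Z W, Rm (-u) Y Z W = -Rm u Y Z W := by
    intro u Y Z W
    rw [hpair (-u) Y Z W, hpair u Y Z W]
    exact Rm3neg Z W u Y
  have Rm1smul : ∀ (r : ℝ) u Y Z W, Rm (r • u) Y Z W = r * Rm u Y Z W := by
    intro r u Y Z W
    rw [hpair (r • u) Y Z W, hpair u Y Z W]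
    exact Rm3smul Z W r u Y
  have Rm2add : ∀ X u v Z W, Rm X (u + v) Z W = Rm X u Z W + Rm X v Z W := by
    intro X u v Z W
    rw [hpair X (u+v) Z W, hpair X u Z W, hpair X v Z W]
    exact Rm4add Z W X u v
  have Rm2neg : ∀ X u Z W, Rm X (-u) Z W = -Rm X u Z W := by
    intro X u Z W
    rw [hpair X (-u) Z W, hpair X u Z W]
    exact Rm4neg Z W X u
  have Rm2smul : ∀ X (r : ℝ) u Z W, Rm X (r • u) Z W = r * Rm X u Z W := by
    intro X r u Z W
    rw [hpair X (r • u) Z W, hpair X u Z W]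
    exact Rm4smul Z W X r u
  -- star relations
  have starI : ∀ X Y Z W, Rm X Y (I Z) W + Rm X Y Z (I W)
      = c X Y * ⟪J Z, W⟫ - b X Y * ⟪K Z, W⟫ := by
    intro X Y Z W
    have h := LinearMap.congr_fun (hsp X Y).1 Z
    simp only [LinearMap.sub_apply, LinearMap.comp_apply, LinearMap.smul_apply] at h
    have h2 := congrArg (fun t => (inner ℝ t W : ℝ)) h
    simp only [inner_sub_left, real_inner_smul_left] at h2
    have e1 : ⟪(Rop X Y) (I Z), W⟫ = Rm X Y (I Z) W := hRop X Y (I Z) W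
    have e2 : ⟪I ((Rop X Y) Z), W⟫ = -Rm X Y Z (I W) := by
      rw [hIs ((Rop X Y) Z) W, hRop X Y Z (I W)]
    rw [e1, e2] at h2
    linarith [h2]
  have starJ : ∀ X Y Z W, Rm X Y (J Z) W + Rm X Y Z (J W)
      = a X Y * ⟪K Z, W⟫ - c X Y * ⟪I Z, W⟫ := by
    intro X Y Z W
    have h := LinearMap.congr_fun (hsp X Y).2.1 Z
    simp only [LinearMap.sub_apply, LinearMap.comp_apply, LinearMap.smul_apply] at h
    have h2 := congrArg (fun t => (inner ℝ t W : ℝ)) h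
    simp only [inner_sub_left, real_inner_smul_left] at h2
    have e1 : ⟪(Rop X Y) (J Z), W⟫ = Rm X Y (J Z) W := hRop X Y (J Z) W
    have e2 : ⟪J ((Rop X Y) Z), W⟫ = -Rm X Y Z (J W) := by
      rw [hJs ((Rop X Y) Z) W, hRop X Y Z (J W)]
    rw [e1, e2] at h2
    linarith [h2]
  have starK : ∀ X Y Z W, Rm X Y (K Z) W + Rm X Y Z (K W)
      = b X Y * ⟪I Z, W⟫ - a X Y * ⟪J Z, W⟫ := by
    intro X Y Z W
    have h := LinearMap.congr_fun (hsp X Y).2.2 Z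
    simp only [LinearMap.sub_apply, LinearMap.comp_apply, LinearMap.smul_apply] at h
    have h2 := congrArg (fun t => (inner ℝ t W : ℝ)) h
    simp only [inner_sub_left, real_inner_smul_left] at h2
    have e1 : ⟪(Rop X Y) (K Z), W⟫ = Rm X Y (K Z) W := hRop X Y (K Z) W
    have e2 : ⟪K ((Rop X Y) Z), W⟫ = -Rm X Y Z (K W) := by
      rw [hKs ((Rop X Y) Z) W, hRop X Y Z (K W)]
    rw [e1, e2] at h2
    linarith [h2]
  -- extraction of a, b, c
  have exA : ∀ X Y Z, Rm X Y (J Z) (K Z) + Rm X Y Z (I Z) = a X Y * ⟪Z, Z⟫ := by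
    intro X Y Z
    have h := starJ X Y Z (K Z)
    rw [hJK' Z, hgK Z Z, hoIK Z] at h
    linarith
  have exB : ∀ X Y Z, Rm X Y (K Z) (I Z) + Rm X Y Z (J Z) = b X Y * ⟪Z, Z⟫ := by
    intro X Y Z
    have h := starK X Y Z (I Z)
    rw [hKI' Z, hgI Z Z, hoJI Z] at h
    linarith
  have exC : ∀ X Y Z, Rm X Y (I Z) (J Z) + Rm X Y Z (K Z) = c X Y * ⟪Z, Z⟫ := by
    intro X Y Z
    have h := starI X Y Z (J Z)
    rw [hIJ' Z, hgJ Z Z, hoKJ Z] at h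
    linarith
  -- a distinguished basis vector
  have hmpos : 0 < 4*m := by omega
  have hE0 : ⟪E ⟨0, hmpos⟩, E ⟨0, hmpos⟩⟫ = (1:ℝ) := by
    simp [hE, EuclideanSpace.inner_single_left, EuclideanSpace.single_apply]
  -- vector representations of a, b, c in the second argument
  have havec : ∀ X Y, a X Y
      = ⟪(Rop (J (E ⟨0, hmpos⟩)) (K (E ⟨0, hmpos⟩))) X + (Rop (E ⟨0, hmpos⟩) (I (E ⟨0, hmpos⟩))) X, Y⟫ := by
    intro X Y
    have h := exA X Y (E ⟨0, hmpos⟩)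
    rw [hE0, mul_one] at h
    rw [← h, hpair X Y (J (E ⟨0, hmpos⟩)) (K (E ⟨0, hmpos⟩)), hpair X Y (E ⟨0, hmpos⟩) (I (E ⟨0, hmpos⟩)),
      inner_add_left, hRop, hRop]
  have hbvec : ∀ X Y, b X Y
      = ⟪(Rop (K (E ⟨0, hmpos⟩)) (I (E ⟨0, hmpos⟩))) X + (Rop (E ⟨0, hmpos⟩) (J (E ⟨0, hmpos⟩))) X, Y⟫ := by
    intro X Y
    have h := exB X Y (E ⟨0, hmpos⟩)
    rw [hE0, mul_one] at h
    rw [← h, hpair X Y (K (E ⟨0, hmpos⟩)) (I (E ⟨0, hmpos⟩)), hpair X Y (E ⟨0, hmpos⟩) (J (E ⟨0, hmpos⟩)),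
      inner_add_left, hRop, hRop]
  have hcvec : ∀ X Y, c X Y
      = ⟪(Rop (I (E ⟨0, hmpos⟩)) (J (E ⟨0, hmpos⟩))) X + (Rop (E ⟨0, hmpos⟩) (K (E ⟨0, hmpos⟩))) X, Y⟫ := by
    intro X Y
    have h := exC X Y (E ⟨0, hmpos⟩)
    rw [hE0, mul_one] at h
    rw [← h, hpair X Y (I (E ⟨0, hmpos⟩)) (J (E ⟨0, hmpos⟩)), hpair X Y (E ⟨0, hmpos⟩) (K (E ⟨0, hmpos⟩)),
      inner_add_left, hRop, hRop]
  -- Parseval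
  have parseval : ∀ (u w : EuclideanSpace ℝ (Fin (4*m))), ∑ i, ⟪u, E i⟫ * w i = ⟪u, w⟫ := by
    intro u w
    simp [PiLp.inner_apply, hE, EuclideanSpace.inner_single_right]
    exact Finset.sum_congr rfl fun _ _ => mul_comm _ _
  -- summation rules for a, b, c against coordinates
  have hasum : ∀ X (w : EuclideanSpace ℝ (Fin (4*m))), ∑ i, a X (E i) * w i = a X w := by
    intro X w
    rw [havec X w, ← parseval _ w]
    exact Finset.sum_congr rfl fun i _ => by rw [havec X (E i)]
  have hbsum : ∀ X (w : EuclideanSpace ℝ (Fin (4*m))), ∑ i, b X (E i) * w i = b X w := by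
    intro X w
    rw [hbvec X w, ← parseval _ w]
    exact Finset.sum_congr rfl fun i _ => by rw [hbvec X (E i)]
  have hcsum : ∀ X (w : EuclideanSpace ℝ (Fin (4*m))), ∑ i, c X (E i) * w i = c X w := by
    intro X w
    rw [hcvec X w, ← parseval _ w]
    exact Finset.sum_congr rfl fun i _ => by rw [hcvec X (E i)]
  -- negation rules
  have haneg : ∀ X u, a X (-u) = -a X u := by
    intro X u; rw [havec X (-u), havec X u, inner_neg_right]
  have hbneg : ∀ X u, b X (-u) = -b X u := by
    intro X u; rw [hbvec X (-u), hbvec X u, inner_neg_right]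
  have hcneg : ∀ X u, c X (-u) = -c X u := by
    intro X u; rw [hcvec X (-u), hcvec X u, inner_neg_right]
  -- coordinates of basis
  have hEcoord : ∀ (i : Fin (4*m)) (u : EuclideanSpace ℝ (Fin (4*m))), ⟪E i, u⟫ = u i := by
    intro i u
    simp [hE, EuclideanSpace.inner_single_left]
  have hEnorm : ∀ i : Fin (4*m), ⟪E i, E i⟫ = (1:ℝ) := by
    intro i
    simp [hE, EuclideanSpace.inner_single_left, EuclideanSpace.single_apply]
  -- polarized Einstein condition
  have hEin' : ∀ X, ∑ i, Rm X (E i) X (E i) = 4*((m:ℝ)+2)*κ * ⟪X,X⟫ := by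
    intro X
    rw [real_inner_self_eq_norm_sq]
    exact hEin X
  have Ric2 : ∀ U V, ∑ i, Rm U (E i) V (E i) = 4*((m:ℝ)+2)*κ * ⟪U,V⟫ := by
    intro U V
    have h1 := hEin' (U + V)
    have expand : ∀ i, Rm (U+V) (E i) (U+V) (E i)
        = Rm U (E i) U (E i) + 2 * Rm U (E i) V (E i) + Rm V (E i) V (E i) := by
      intro i
      rw [Rm1add U V (E i) (U+V) (E i), Rm3add U (E i) U V (E i), Rm3add V (E i) U V (E i),
        hpair V (E i) U (E i)]
      ring
    rw [Finset.sum_congr rfl fun i _ => expand i, Finset.sum_add_distrib,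
      Finset.sum_add_distrib, ← Finset.mul_sum, hEin' U, hEin' V,
      real_inner_add_add_self] at h1
    linear_combination h1 / 2
  -- basis-change sums
  have hSJK : ∀ X Y, ∑ i, Rm X Y (E i) (I (E i)) = ∑ i, Rm X Y (J (E i)) (K (E i)) := by
    intro X Y
    have hb := sum_basis_change (fun z w => Rm X Y (J z) (K w))
      (fun u v w => by
        show Rm X Y (J (u+v)) (K w) = Rm X Y (J u) (K w) + Rm X Y (J v) (K w)
        rw [map_add]
        exact Rm3add X Y (J u) (J v) (K w))
      (fun r u w => by
        show Rm X Y (J (r • u)) (K w) = r * Rm X Y (J u) (K w)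
        rw [map_smul]
        exact Rm3smul X Y r (J u) (K w))
      (fun u v w => by
        show Rm X Y (J u) (K (v+w)) = Rm X Y (J u) (K v) + Rm X Y (J u) (K w)
        rw [map_add]
        exact Rm4add X Y (J u) (K v) (K w))
      (fun r u v => by
        show Rm X Y (J u) (K (r • v)) = r * Rm X Y (J u) (K v)
        rw [map_smul]
        exact Rm4smul X Y (J u) r (K v))
      J hgJ hJs
    calc ∑ i, Rm X Y (E i) (I (E i))
        = ∑ i, Rm X Y (J (J (E i))) (K (J (E i))) := by
          refine Finset.sum_congr rfl fun i _ => ?_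
          rw [hJ2' (E i), hKJ' (E i), Rm3neg, Rm4neg]
          ring
      _ = ∑ i, Rm X Y (J (E i)) (K (E i)) := hb
  have hSKI : ∀ X Y, ∑ i, Rm X Y (E i) (J (E i)) = ∑ i, Rm X Y (K (E i)) (I (E i)) := by
    intro X Y
    have hb := sum_basis_change (fun z w => Rm X Y (K z) (I w))
      (fun u v w => by
        show Rm X Y (K (u+v)) (I w) = Rm X Y (K u) (I w) + Rm X Y (K v) (I w)
        rw [map_add]
        exact Rm3add X Y (K u) (K v) (I w))
      (fun r u w => by
        show Rm X Y (K (r • u)) (I w) = r * Rm X Y (K u) (I w)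
        rw [map_smul]
        exact Rm3smul X Y r (K u) (I w))
      (fun u v w => by
        show Rm X Y (K u) (I (v+w)) = Rm X Y (K u) (I v) + Rm X Y (K u) (I w)
        rw [map_add]
        exact Rm4add X Y (K u) (I v) (I w))
      (fun r u v => by
        show Rm X Y (K u) (I (r • v)) = r * Rm X Y (K u) (I v)
        rw [map_smul]
        exact Rm4smul X Y (K u) r (I v))
      K hgK hKs
    calc ∑ i, Rm X Y (E i) (J (E i))
        = ∑ i, Rm X Y (K (K (E i))) (I (K (E i))) := by
          refine Finset.sum_congr rfl fun i _ => ?_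
          rw [hK2' (E i), hIK' (E i), Rm3neg, Rm4neg]
          ring
      _ = ∑ i, Rm X Y (K (E i)) (I (E i)) := hb
  have hSIJ : ∀ X Y, ∑ i, Rm X Y (E i) (K (E i)) = ∑ i, Rm X Y (I (E i)) (J (E i)) := by
    intro X Y
    have hb := sum_basis_change (fun z w => Rm X Y (I z) (J w))
      (fun u v w => by
        show Rm X Y (I (u+v)) (J w) = Rm X Y (I u) (J w) + Rm X Y (I v) (J w)
        rw [map_add]
        exact Rm3add X Y (I u) (I v) (J w))
      (fun r u w => by
        show Rm X Y (I (r • u)) (J w) = r * Rm X Y (I u) (J w)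
        rw [map_smul]
        exact Rm3smul X Y r (I u) (J w))
      (fun u v w => by
        show Rm X Y (I u) (J (v+w)) = Rm X Y (I u) (J v) + Rm X Y (I u) (J w)
        rw [map_add]
        exact Rm4add X Y (I u) (J v) (J w))
      (fun r u v => by
        show Rm X Y (I u) (J (r • v)) = r * Rm X Y (I u) (J v)
        rw [map_smul]
        exact Rm4smul X Y (I u) r (J v))
      I hgI hIs
    calc ∑ i, Rm X Y (E i) (K (E i))
        = ∑ i, Rm X Y (I (I (E i))) (J (I (E i))) := by
          refine Finset.sum_congr rfl fun i _ => ?_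
          rw [hI2' (E i), hJI' (E i), Rm3neg, Rm4neg]
          ring
      _ = ∑ i, Rm X Y (I (E i)) (J (E i)) := hb
  -- trace identities: 4m * coefficient = 2 * S
  have ha4m : ∀ X Y, ((4*m : ℕ) : ℝ) * a X Y = 2 * ∑ i, Rm X Y (E i) (I (E i)) := by
    intro X Y
    have h : ∑ i, (Rm X Y (J (E i)) (K (E i)) + Rm X Y (E i) (I (E i)))
        = ∑ i : Fin (4*m), a X Y * ⟪E i, E i⟫ :=
      Finset.sum_congr rfl fun i _ => exA X Y (E i)
    rw [Finset.sum_add_distrib, ← hSJK X Y] at h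
    have h2 : ∑ i : Fin (4*m), a X Y * ⟪E i, E i⟫ = ((4*m : ℕ) : ℝ) * a X Y := by
      rw [Finset.sum_congr rfl fun i _ => by rw [hEnorm i, mul_one]]
      simp [Finset.sum_const]
    rw [h2] at h
    linarith
  have hb4m : ∀ X Y, ((4*m : ℕ) : ℝ) * b X Y = 2 * ∑ i, Rm X Y (E i) (J (E i)) := by
    intro X Y
    have h : ∑ i, (Rm X Y (K (E i)) (I (E i)) + Rm X Y (E i) (J (E i)))
        = ∑ i : Fin (4*m), b X Y * ⟪E i, E i⟫ :=
      Finset.sum_congr rfl fun i _ => exB X Y (E i)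
    rw [Finset.sum_add_distrib, ← hSKI X Y] at h
    have h2 : ∑ i : Fin (4*m), b X Y * ⟪E i, E i⟫ = ((4*m : ℕ) : ℝ) * b X Y := by
      rw [Finset.sum_congr rfl fun i _ => by rw [hEnorm i, mul_one]]
      simp [Finset.sum_const]
    rw [h2] at h
    linarith
  have hc4m : ∀ X Y, ((4*m : ℕ) : ℝ) * c X Y = 2 * ∑ i, Rm X Y (E i) (K (E i)) := by
    intro X Y
    have h : ∑ i, (Rm X Y (I (E i)) (J (E i)) + Rm X Y (E i) (K (E i)))
        = ∑ i : Fin (4*m), c X Y * ⟪E i, E i⟫ :=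
      Finset.sum_congr rfl fun i _ => exC X Y (E i)
    rw [Finset.sum_add_distrib, ← hSIJ X Y] at h
    have h2 : ∑ i : Fin (4*m), c X Y * ⟪E i, E i⟫ = ((4*m : ℕ) : ℝ) * c X Y := by
      rw [Finset.sum_congr rfl fun i _ => by rw [hEnorm i, mul_one]]
      simp [Finset.sum_const]
    rw [h2] at h
    linarith
  have hSTI : ∀ X Y, ∑ i, Rm X Y (E i) (I (E i)) = -2 * ∑ i, Rm X (E i) (I (E i)) Y := by
    intro X Y
    have hb := sum_basis_change (fun z w => Rm (I z) X w Y)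
      (fun u v w => by
        show Rm (I (u+v)) X w Y = Rm (I u) X w Y + Rm (I v) X w Y
        rw [map_add]
        exact Rm1add (I u) (I v) X w Y)
      (fun r u w => by
        show Rm (I (r • u)) X w Y = r * Rm (I u) X w Y
        rw [map_smul]
        exact Rm1smul r (I u) X w Y)
      (fun u v w => by
        show Rm (I u) X (v + w) Y = Rm (I u) X v Y + Rm (I u) X w Y
        exact Rm3add (I u) X v w Y)
      (fun r u v => by
        show Rm (I u) X (r • v) Y = r * Rm (I u) X v Y
        exact Rm3smul (I u) X r v Y)
      I hgI hIs
    have h2 : ∑ i, Rm (I (E i)) X (E i) Y = ∑ i, Rm X (E i) (I (E i)) Y := by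
      rw [← hb]
      refine Finset.sum_congr rfl fun i _ => ?_
      show Rm (I (I (E i))) X (I (E i)) Y = Rm X (E i) (I (E i)) Y
      rw [hI2' (E i), Rm1neg (E i) X (I (E i)) Y, hanti1 (E i) X (I (E i)) Y]
      ring
    have hsum : ∑ i, (Rm (E i) (I (E i)) X Y + Rm (I (E i)) X (E i) Y
        + Rm X (E i) (I (E i)) Y) = 0 := by
      rw [Finset.sum_congr rfl fun i _ => hbianchi (E i) (I (E i)) X Y]
      simp
    rw [Finset.sum_add_distrib, Finset.sum_add_distrib] at hsum
    have h1 : ∑ i, Rm (E i) (I (E i)) X Y = ∑ i, Rm X Y (E i) (I (E i)) :=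
      Finset.sum_congr rfl fun i _ => hpair (E i) (I (E i)) X Y
    rw [h1, h2] at hsum
    linarith
  have hTI : ∀ X Y, ∑ i, Rm X (E i) (I (E i)) Y
      = 4*((m:ℝ)+2)*κ * ⟪I Y, X⟫ - c X (J Y) + b X (K Y) := by
    intro X Y
    have h : ∑ i, (Rm X (E i) (I (E i)) Y + Rm X (E i) (E i) (I Y))
        = ∑ i, (c X (E i) * ⟪J (E i), Y⟫ - b X (E i) * ⟪K (E i), Y⟫) :=
      Finset.sum_congr rfl fun i _ => starI X (E i) (E i) Y
    have h2 : ∑ i, Rm X (E i) (E i) (I Y) = -(4*((m:ℝ)+2)*κ * ⟪I Y, X⟫) := by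
      have he : ∀ i, Rm X (E i) (E i) (I Y) = -Rm (I Y) (E i) X (E i) := by
        intro i
        rw [hpair X (E i) (E i) (I Y), hanti1 (E i) (I Y) X (E i)]
      rw [Finset.sum_congr rfl fun i _ => he i, Finset.sum_neg_distrib, Ric2 (I Y) X]
    have h3 : ∑ i, (c X (E i) * ⟪J (E i), Y⟫ - b X (E i) * ⟪K (E i), Y⟫)
        = -(c X (J Y)) + b X (K Y) := by
      have he : ∀ i : Fin (4*m), c X (E i) * ⟪J (E i), Y⟫ - b X (E i) * ⟪K (E i), Y⟫
          = -(c X (E i) * (J Y) i) + b X (E i) * (K Y) i := by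
        intro i
        rw [hJs (E i) Y, hEcoord i (J Y), hKs (E i) Y, hEcoord i (K Y)]
        ring
      rw [Finset.sum_congr rfl fun i _ => he i, Finset.sum_add_distrib,
        Finset.sum_neg_distrib, hcsum X (J Y), hbsum X (K Y)]
    rw [Finset.sum_add_distrib, h2, h3] at h
    linarith
  have hSTJ : ∀ X Y, ∑ i, Rm X Y (E i) (J (E i)) = -2 * ∑ i, Rm X (E i) (J (E i)) Y := by
    intro X Y
    have hb := sum_basis_change (fun z w => Rm (J z) X w Y)
      (fun u v w => by
        show Rm (J (u+v)) X w Y = Rm (J u) X w Y + Rm (J v) X w Y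
        rw [map_add]
        exact Rm1add (J u) (J v) X w Y)
      (fun r u w => by
        show Rm (J (r • u)) X w Y = r * Rm (J u) X w Y
        rw [map_smul]
        exact Rm1smul r (J u) X w Y)
      (fun u v w => by
        show Rm (J u) X (v + w) Y = Rm (J u) X v Y + Rm (J u) X w Y
        exact Rm3add (J u) X v w Y)
      (fun r u v => by
        show Rm (J u) X (r • v) Y = r * Rm (J u) X v Y
        exact Rm3smul (J u) X r v Y)
      J hgJ hJs
    have h2 : ∑ i, Rm (J (E i)) X (E i) Y = ∑ i, Rm X (E i) (J (E i)) Y := by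
      rw [← hb]
      refine Finset.sum_congr rfl fun i _ => ?_
      show Rm (J (J (E i))) X (J (E i)) Y = Rm X (E i) (J (E i)) Y
      rw [hJ2' (E i), Rm1neg (E i) X (J (E i)) Y, hanti1 (E i) X (J (E i)) Y]
      ring
    have hsum : ∑ i, (Rm (E i) (J (E i)) X Y + Rm (J (E i)) X (E i) Y
        + Rm X (E i) (J (E i)) Y) = 0 := by
      rw [Finset.sum_congr rfl fun i _ => hbianchi (E i) (J (E i)) X Y]
      simp
    rw [Finset.sum_add_distrib, Finset.sum_add_distrib] at hsum
    have h1 : ∑ i, Rm (E i) (J (E i)) X Y = ∑ i, Rm X Y (E i) (J (E i)) :=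
      Finset.sum_congr rfl fun i _ => hpair (E i) (J (E i)) X Y
    rw [h1, h2] at hsum
    linarith
  have hTJ : ∀ X Y, ∑ i, Rm X (E i) (J (E i)) Y
      = 4*((m:ℝ)+2)*κ * ⟪J Y, X⟫ - a X (K Y) + c X (I Y) := by
    intro X Y
    have h : ∑ i, (Rm X (E i) (J (E i)) Y + Rm X (E i) (E i) (J Y))
        = ∑ i, (a X (E i) * ⟪K (E i), Y⟫ - c X (E i) * ⟪I (E i), Y⟫) :=
      Finset.sum_congr rfl fun i _ => starJ X (E i) (E i) Y
    have h2 : ∑ i, Rm X (E i) (E i) (J Y) = -(4*((m:ℝ)+2)*κ * ⟪J Y, X⟫) := by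
      have he : ∀ i, Rm X (E i) (E i) (J Y) = -Rm (J Y) (E i) X (E i) := by
        intro i
        rw [hpair X (E i) (E i) (J Y), hanti1 (E i) (J Y) X (E i)]
      rw [Finset.sum_congr rfl fun i _ => he i, Finset.sum_neg_distrib, Ric2 (J Y) X]
    have h3 : ∑ i, (a X (E i) * ⟪K (E i), Y⟫ - c X (E i) * ⟪I (E i), Y⟫)
        = -(a X (K Y)) + c X (I Y) := by
      have he : ∀ i : Fin (4*m), a X (E i) * ⟪K (E i), Y⟫ - c X (E i) * ⟪I (E i), Y⟫
          = -(a X (E i) * (K Y) i) + c X (E i) * (I Y) i := by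
        intro i
        rw [hKs (E i) Y, hEcoord i (K Y), hIs (E i) Y, hEcoord i (I Y)]
        ring
      rw [Finset.sum_congr rfl fun i _ => he i, Finset.sum_add_distrib,
        Finset.sum_neg_distrib, hasum X (K Y), hcsum X (I Y)]
    rw [Finset.sum_add_distrib, h2, h3] at h
    linarith
  have hSTK : ∀ X Y, ∑ i, Rm X Y (E i) (K (E i)) = -2 * ∑ i, Rm X (E i) (K (E i)) Y := by
    intro X Y
    have hb := sum_basis_change (fun z w => Rm (K z) X w Y)
      (fun u v w => by
        show Rm (K (u+v)) X w Y = Rm (K u) X w Y + Rm (K v) X w Y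
        rw [map_add]
        exact Rm1add (K u) (K v) X w Y)
      (fun r u w => by
        show Rm (K (r • u)) X w Y = r * Rm (K u) X w Y
        rw [map_smul]
        exact Rm1smul r (K u) X w Y)
      (fun u v w => by
        show Rm (K u) X (v + w) Y = Rm (K u) X v Y + Rm (K u) X w Y
        exact Rm3add (K u) X v w Y)
      (fun r u v => by
        show Rm (K u) X (r • v) Y = r * Rm (K u) X v Y
        exact Rm3smul (K u) X r v Y)
      K hgK hKs
    have h2 : ∑ i, Rm (K (E i)) X (E i) Y = ∑ i, Rm X (E i) (K (E i)) Y := by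
      rw [← hb]
      refine Finset.sum_congr rfl fun i _ => ?_
      show Rm (K (K (E i))) X (K (E i)) Y = Rm X (E i) (K (E i)) Y
      rw [hK2' (E i), Rm1neg (E i) X (K (E i)) Y, hanti1 (E i) X (K (E i)) Y]
      ring
    have hsum : ∑ i, (Rm (E i) (K (E i)) X Y + Rm (K (E i)) X (E i) Y
        + Rm X (E i) (K (E i)) Y) = 0 := by
      rw [Finset.sum_congr rfl fun i _ => hbianchi (E i) (K (E i)) X Y]
      simp
    rw [Finset.sum_add_distrib, Finset.sum_add_distrib] at hsum
    have h1 : ∑ i, Rm (E i) (K (E i)) X Y = ∑ i, Rm X Y (E i) (K (E i)) :=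
      Finset.sum_congr rfl fun i _ => hpair (E i) (K (E i)) X Y
    rw [h1, h2] at hsum
    linarith
  have hTK : ∀ X Y, ∑ i, Rm X (E i) (K (E i)) Y
      = 4*((m:ℝ)+2)*κ * ⟪K Y, X⟫ - b X (I Y) + a X (J Y) := by
    intro X Y
    have h : ∑ i, (Rm X (E i) (K (E i)) Y + Rm X (E i) (E i) (K Y))
        = ∑ i, (b X (E i) * ⟪I (E i), Y⟫ - a X (E i) * ⟪J (E i), Y⟫) :=
      Finset.sum_congr rfl fun i _ => starK X (E i) (E i) Y
    have h2 : ∑ i, Rm X (E i) (E i) (K Y) = -(4*((m:ℝ)+2)*κ * ⟪K Y, X⟫) := by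
      have he : ∀ i, Rm X (E i) (E i) (K Y) = -Rm (K Y) (E i) X (E i) := by
        intro i
        rw [hpair X (E i) (E i) (K Y), hanti1 (E i) (K Y) X (E i)]
      rw [Finset.sum_congr rfl fun i _ => he i, Finset.sum_neg_distrib, Ric2 (K Y) X]
    have h3 : ∑ i, (b X (E i) * ⟪I (E i), Y⟫ - a X (E i) * ⟪J (E i), Y⟫)
        = -(b X (I Y)) + a X (J Y) := by
      have he : ∀ i : Fin (4*m), b X (E i) * ⟪I (E i), Y⟫ - a X (E i) * ⟪J (E i), Y⟫
          = -(b X (E i) * (I Y) i) + a X (E i) * (J Y) i := by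
        intro i
        rw [hIs (E i) Y, hEcoord i (I Y), hJs (E i) Y, hEcoord i (J Y)]
        ring
      rw [Finset.sum_congr rfl fun i _ => he i, Finset.sum_add_distrib,
        Finset.sum_neg_distrib, hbsum X (I Y), hasum X (J Y)]
    rw [Finset.sum_add_distrib, h2, h3] at h
    linarith
  have mEI : ∀ X Y, (m:ℝ) * a X Y
      = -(4*((m:ℝ)+2)*κ * ⟪I Y, X⟫) + c X (J Y) - b X (K Y) := by
    intro X Y
    have h1 := ha4m X Y
    have h2 := hSTI X Y
    have h3 := hTI X Y
    push_cast at h1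
    linarith
  have mEJ : ∀ X Y, (m:ℝ) * b X Y
      = -(4*((m:ℝ)+2)*κ * ⟪J Y, X⟫) + a X (K Y) - c X (I Y) := by
    intro X Y
    have h1 := hb4m X Y
    have h2 := hSTJ X Y
    have h3 := hTJ X Y
    push_cast at h1
    linarith
  have mEK : ∀ X Y, (m:ℝ) * c X Y
      = -(4*((m:ℝ)+2)*κ * ⟪K Y, X⟫) + b X (I Y) - a X (J Y) := by
    intro X Y
    have h1 := hc4m X Y
    have h2 := hSTK X Y
    have h3 := hTK X Y
    push_cast at h1
    linarith
  -- solve the linear system for a, b, c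
  have hmne : ((m:ℝ)+2) * ((m:ℝ)-1) ≠ 0 := by
    have h2m : (2:ℝ) ≤ (m:ℝ) := by exact_mod_cast hm
    nlinarith
  have haf : ∀ X Y, a X Y = -(4*κ) * ⟪I Y, X⟫ := by
    intro X Y
    have h1 := mEI X Y
    have h2 := mEK X (J Y)
    have h3 := mEJ X (K Y)
    rw [hKJ' Y, hIJ' Y, hJ2' Y, haneg X Y, inner_neg_left] at h2
    rw [hJK' Y, hK2' Y, hIK' Y, haneg X Y, hcneg X (J Y)] at h3
    have key : (((m:ℝ)+2) * ((m:ℝ)-1)) * (a X Y)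
        = (((m:ℝ)+2) * ((m:ℝ)-1)) * (-(4*κ) * ⟪I Y, X⟫) := by
      linear_combination ((m:ℝ)+1) * h1 + h2 - h3
    exact mul_left_cancel₀ hmne key
  have hbf : ∀ X Y, b X Y = -(4*κ) * ⟪J Y, X⟫ := by
    intro X Y
    have h1 := mEJ X Y
    have h2 := mEI X (K Y)
    have h3 := mEK X (I Y)
    rw [hIK' Y, hJK' Y, hK2' Y, hbneg X Y, inner_neg_left] at h2
    rw [hKI' Y, hI2' Y, hJI' Y, hbneg X Y, haneg X (K Y)] at h3
    have key : (((m:ℝ)+2) * ((m:ℝ)-1)) * (b X Y)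
        = (((m:ℝ)+2) * ((m:ℝ)-1)) * (-(4*κ) * ⟪J Y, X⟫) := by
      linear_combination ((m:ℝ)+1) * h1 + h2 - h3
    exact mul_left_cancel₀ hmne key
  have hcf : ∀ X Y, c X Y = -(4*κ) * ⟪K Y, X⟫ := by
    intro X Y
    have h1 := mEK X Y
    have h2 := mEJ X (I Y)
    have h3 := mEI X (J Y)
    rw [hJI' Y, hKI' Y, hI2' Y, hcneg X Y, inner_neg_left] at h2
    rw [hIJ' Y, hJ2' Y, hKJ' Y, hcneg X Y, hbneg X (I Y)] at h3
    have key : (((m:ℝ)+2) * ((m:ℝ)-1)) * (c X Y)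
        = (((m:ℝ)+2) * ((m:ℝ)-1)) * (-(4*κ) * ⟪K Y, X⟫) := by
      linear_combination ((m:ℝ)+1) * h1 + h2 - h3
    exact mul_left_cancel₀ hmne key
  -- final computation
  intro X
  have vA : a X (I X) = 4*κ*⟪X,X⟫ := by
    rw [haf X (I X), hI2' X, inner_neg_left]
    ring
  have vC1 : c X (I X) = 0 := by
    rw [hcf X (I X), hKI' X, hoJ X]
    ring
  have vB : b X (J X) = 4*κ*⟪X,X⟫ := by
    rw [hbf X (J X), hJ2' X, inner_neg_left]
    ring
  have vC3 : c X (K X) = 4*κ*⟪X,X⟫ := by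
    rw [hcf X (K X), hK2' X, inner_neg_left]
    ring
  have vB2 : b X (K X) = 0 := by
    rw [hbf X (K X), hJK' X, hoI X]
    ring
  have hA := starJ X (I X) X (K X)
  rw [hJK' X, vA, vC1, hgK X X, hoIK X] at hA
  have vC2 : c X (J X) = 0 := by
    rw [hcf X (J X), hKJ' X, inner_neg_left, hoI X]
    ring
  have hB := starI X (J X) X (K X)
  rw [hIK' X, Rm4neg X (J X) X (J X), vC2, vB, hoJK X, hgK X X] at hB
  have hC := starI X (K X) X (J X)
  rw [hIJ' X, vC3, vB2, hgJ X X, hoKJ X] at hC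
  have hBi := hbianchi X (K X) (J X) (I X)
  have s1 : Rm X (K X) (J X) (I X) = -Rm X (K X) (I X) (J X) :=
    hanti2 X (K X) (J X) (I X)
  have s2 : Rm (K X) (J X) X (I X) = -Rm X (I X) (J X) (K X) := by
    rw [hpair (K X) (J X) X (I X)]
    exact hanti2 X (I X) (K X) (J X)
  have s3 : Rm (J X) X (K X) (I X) = Rm X (J X) (I X) (K X) := by
    rw [hanti1 (J X) X (K X) (I X), hanti2 X (J X) (K X) (I X)]
    ring
  have hx : ‖X‖^4 = ⟪X,X⟫*⟪X,X⟫ := by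
    rw [real_inner_self_eq_norm_sq X]
    ring
  rw [hx]
  linarith [hA, hB, hC, hBi, s1, s2, s3]
end

section
/- On a quaternionic Kähler manifold of quaternionic dimension m ≥ 2 with Ric = 4(m+2)κ g, the orthogonal Ricci curvature is constant: Ric^⊥(X, X) := Ric(X,X) - Q(X) = 4(m-1)κ |X|² for every tangent vector X (where Q(X) is normalized by |X|²). -/
open Real RealInnerProductSpace

private lemma eucl_decomp {n : ℕ} (x : EuclideanSpace ℝ (Fin n)) :
    ∑ i, x i • EuclideanSpace.single i (1:ℝ) = x := by
  have h := (EuclideanSpace.basisFun (Fin n) ℝ).sum_repr' x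
  simp only [EuclideanSpace.basisFun_apply, EuclideanSpace.inner_single_left] at h
  simpa using h

private lemma eucl_inner_single {n : ℕ} (x : EuclideanSpace ℝ (Fin n)) (i : Fin n) :
    ⟪x, EuclideanSpace.single i (1:ℝ)⟫ = x i := by
  simp [EuclideanSpace.inner_single_right]

private lemma eucl_inner_sum {n : ℕ} (u y : EuclideanSpace ℝ (Fin n)) :
    ∑ i, ⟪u, EuclideanSpace.single i (1:ℝ)⟫ * y i = ⟪u, y⟫ := by
  simp only [eucl_inner_single]
  simp [PiLp.inner_apply]
  exact Finset.sum_congr rfl fun i _ => mul_comm _ _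

private lemma eucl_tr_comm {n : ℕ}
    (P Q : EuclideanSpace ℝ (Fin n) →ₗ[ℝ] EuclideanSpace ℝ (Fin n)) :
    ∑ i, ⟪P (Q (EuclideanSpace.single i 1)), EuclideanSpace.single i (1:ℝ)⟫
      = ∑ i, ⟪Q (P (EuclideanSpace.single i 1)), EuclideanSpace.single i (1:ℝ)⟫ := by
  have step : ∀ (P Q : EuclideanSpace ℝ (Fin n) →ₗ[ℝ] EuclideanSpace ℝ (Fin n)),
      ∑ i, ⟪P (Q (EuclideanSpace.single i 1)), EuclideanSpace.single i (1:ℝ)⟫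
        = ∑ i, ∑ j, (Q (EuclideanSpace.single i 1) : EuclideanSpace ℝ (Fin n)) j
            * ⟪P (EuclideanSpace.single j 1), EuclideanSpace.single i (1:ℝ)⟫ := by
    intro P Q
    refine Finset.sum_congr rfl fun i _ => ?_
    have hx : P (Q (EuclideanSpace.single i 1)) =
        ∑ j, (Q (EuclideanSpace.single i 1) : EuclideanSpace ℝ (Fin n)) j
          • P (EuclideanSpace.single j 1) := by
      conv_lhs => rw [← eucl_decomp (Q (EuclideanSpace.single i 1))]
      rw [map_sum]
      exact Finset.sum_congr rfl fun j _ => by rw [map_smul]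
    rw [hx, sum_inner]
    exact Finset.sum_congr rfl fun j _ => real_inner_smul_left _ _ _
  rw [step P Q, step Q P, Finset.sum_comm]
  refine Finset.sum_congr rfl fun i _ => Finset.sum_congr rfl fun j _ => ?_
  rw [eucl_inner_single, eucl_inner_single]
  ring

private lemma eucl_curl {n : ℕ}
    (A β γ α : EuclideanSpace ℝ (Fin n) →ₗ[ℝ] EuclideanSpace ℝ (Fin n))
    (hγ : ∀ x y : EuclideanSpace ℝ (Fin n), ⟪γ x, y⟫ = -⟪x, γ y⟫)
    (hα : ∀ x y : EuclideanSpace ℝ (Fin n), ⟪α x, y⟫ = -⟪x, α y⟫)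
    (hβγ : ∀ x, β (γ x) = α x) :
    ∑ i, ⟪A (β (EuclideanSpace.single i 1)), γ (EuclideanSpace.single i (1:ℝ))⟫
      = ∑ i, ⟪A (EuclideanSpace.single i 1), α (EuclideanSpace.single i (1:ℝ))⟫ := by
  have h1 : ∑ i, ⟪A (β (EuclideanSpace.single i 1)), γ (EuclideanSpace.single i (1:ℝ))⟫
      = -∑ i, ⟪γ ((A ∘ₗ β) (EuclideanSpace.single i 1)), EuclideanSpace.single i (1:ℝ)⟫ := by
    rw [← Finset.sum_neg_distrib]
    refine Finset.sum_congr rfl fun i _ => ?_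
    rw [LinearMap.comp_apply, hγ]
    ring
  have h2 := eucl_tr_comm γ (A ∘ₗ β)
  have h3 : ∑ i, ⟪(A ∘ₗ β) (γ (EuclideanSpace.single i 1)), EuclideanSpace.single i (1:ℝ)⟫
      = ∑ i, ⟪A (α (EuclideanSpace.single i 1)), EuclideanSpace.single i (1:ℝ)⟫ := by
    refine Finset.sum_congr rfl fun i _ => ?_
    simp only [LinearMap.comp_apply, hβγ]
  have h4 := eucl_tr_comm A α
  have h5 : ∑ i, ⟪α (A (EuclideanSpace.single i 1)), EuclideanSpace.single i (1:ℝ)⟫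
      = -∑ i, ⟪A (EuclideanSpace.single i 1), α (EuclideanSpace.single i (1:ℝ))⟫ := by
    rw [← Finset.sum_neg_distrib]
    refine Finset.sum_congr rfl fun i _ => ?_
    rw [hα]
  rw [h1, h2, h3, h4, h5, neg_neg]

set_option maxHeartbeats 2000000

/-- Pointwise model of a quaternionic Kähler manifold of quaternionic dimension `m ≥ 2`:
the tangent space `V = ℝ^{4m}` carries orthogonal complex structures `I, J, K` with the
quaternion relations, and a curvature tensor `Rm` (with operator form `Rop`) having the
standard symmetries, whose operators commute with the `sp(1)`-span of `I, J, K` modulo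
that span (the pointwise consequence of the bundle `V ⊂ End(TM)` being parallel).
If the manifold is Einstein with `Ric = 4(m+2)κ`, then the orthogonal Ricci curvature is
constant: `Ric^⊥(X,X) = Ric(X,X) - Q(X) = 4(m-1)κ|X|²`, where `Q` is normalized by `|X|²`. -/
theorem stmt14 (m : ℕ) (hm : 2 ≤ m) (κ : ℝ)
    (I J K : EuclideanSpace ℝ (Fin (4*m)) →ₗ[ℝ] EuclideanSpace ℝ (Fin (4*m)))
    (hI2 : I ∘ₗ I = -LinearMap.id) (hJ2 : J ∘ₗ J = -LinearMap.id)
    (hK2 : K ∘ₗ K = -LinearMap.id)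
    (hIJ : I ∘ₗ J = K) (hJI : J ∘ₗ I = -K)
    (hJK : J ∘ₗ K = I) (hKJ : K ∘ₗ J = -I)
    (hKI : K ∘ₗ I = J) (hIK : I ∘ₗ K = -J)
    (hgI : ∀ X Y, ⟪I X, I Y⟫ = ⟪X, Y⟫)
    (hgJ : ∀ X Y, ⟪J X, J Y⟫ = ⟪X, Y⟫)
    (hgK : ∀ X Y, ⟪K X, K Y⟫ = ⟪X, Y⟫)
    (Rm : EuclideanSpace ℝ (Fin (4*m)) → EuclideanSpace ℝ (Fin (4*m)) →
      EuclideanSpace ℝ (Fin (4*m)) → EuclideanSpace ℝ (Fin (4*m)) → ℝ)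
    (Rop : EuclideanSpace ℝ (Fin (4*m)) → EuclideanSpace ℝ (Fin (4*m)) →
      EuclideanSpace ℝ (Fin (4*m)) →ₗ[ℝ] EuclideanSpace ℝ (Fin (4*m)))
    (hRop : ∀ X Y Z W, ⟪Rop X Y Z, W⟫ = Rm X Y Z W)
    (hanti1 : ∀ X Y Z W, Rm X Y Z W = -Rm Y X Z W)
    (hanti2 : ∀ X Y Z W, Rm X Y Z W = -Rm X Y W Z)
    (hpair : ∀ X Y Z W, Rm X Y Z W = Rm Z W X Y)
    (hbianchi : ∀ X Y Z W, Rm X Y Z W + Rm Y Z X W + Rm Z X Y W = 0)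
    -- parallelness of the quaternionic bundle: curvature commutes with span{I,J,K}
    -- modulo span{I,J,K}
    (hsp1 : ∃ a b c : EuclideanSpace ℝ (Fin (4*m)) → EuclideanSpace ℝ (Fin (4*m)) → ℝ,
      ∀ X Y,
        Rop X Y ∘ₗ I - I ∘ₗ Rop X Y = c X Y • J - b X Y • K ∧
        Rop X Y ∘ₗ J - J ∘ₗ Rop X Y = a X Y • K - c X Y • I ∧
        Rop X Y ∘ₗ K - K ∘ₗ Rop X Y = b X Y • I - a X Y • J)
    -- Einstein condition Ric = 4(m+2)κ
    (hEin : ∀ X, (∑ i : Fin (4*m), Rm X (EuclideanSpace.single i 1) X (EuclideanSpace.single i 1))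
      = 4*((m:ℝ)+2)*κ * ‖X‖^2) :
    ∀ X : EuclideanSpace ℝ (Fin (4*m)), X ≠ 0 →
      (∑ i : Fin (4*m), Rm X (EuclideanSpace.single i 1) X (EuclideanSpace.single i 1))
        - (Rm X (I X) X (I X) + Rm X (J X) X (J X) + Rm X (K X) X (K X)) / ‖X‖^2
      = 4*((m:ℝ)-1)*κ * ‖X‖^2 := by
  obtain ⟨a, b, c, hsp⟩ := hsp1
  -- pointwise quaternion identities
  have hII : ∀ x, I (I x) = -x := fun x => by simpa using LinearMap.congr_fun hI2 x
  have hJJ : ∀ x, J (J x) = -x := fun x => by simpa using LinearMap.congr_fun hJ2 x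
  have hKK : ∀ x, K (K x) = -x := fun x => by simpa using LinearMap.congr_fun hK2 x
  have hIJa : ∀ x, I (J x) = K x := fun x => by simpa using LinearMap.congr_fun hIJ x
  have hJIa : ∀ x, J (I x) = -(K x) := fun x => by simpa using LinearMap.congr_fun hJI x
  have hJKa : ∀ x, J (K x) = I x := fun x => by simpa using LinearMap.congr_fun hJK x
  have hKJa : ∀ x, K (J x) = -(I x) := fun x => by simpa using LinearMap.congr_fun hKJ x
  have hKIa : ∀ x, K (I x) = J x := fun x => by simpa using LinearMap.congr_fun hKI x
  have hIKa : ∀ x, I (K x) = -(J x) := fun x => by simpa using LinearMap.congr_fun hIK x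
  -- skew-adjointness
  have hIsk : ∀ x y, ⟪I x, y⟫ = -⟪x, I y⟫ := by
    intro x y
    have h := hgI x (I y)
    rw [hII, inner_neg_right] at h
    linarith
  have hJsk : ∀ x y, ⟪J x, y⟫ = -⟪x, J y⟫ := by
    intro x y
    have h := hgJ x (J y)
    rw [hJJ, inner_neg_right] at h
    linarith
  have hKsk : ∀ x y, ⟪K x, y⟫ = -⟪x, K y⟫ := by
    intro x y
    have h := hgK x (K y)
    rw [hKK, inner_neg_right] at h
    linarith
  have hI0 : ∀ x, ⟪I x, x⟫ = 0 := by
    intro x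
    have h := hIsk x x
    have h2 : ⟪x, I x⟫ = ⟪I x, x⟫ := real_inner_comm _ _
    linarith
  have hJ0 : ∀ x, ⟪J x, x⟫ = 0 := by
    intro x
    have h := hJsk x x
    have h2 : ⟪x, J x⟫ = ⟪J x, x⟫ := real_inner_comm _ _
    linarith
  have hK0 : ∀ x, ⟪K x, x⟫ = 0 := by
    intro x
    have h := hKsk x x
    have h2 : ⟪x, K x⟫ = ⟪K x, x⟫ := real_inner_comm _ _
    linarith
  have hJI0 : ∀ x, ⟪J x, I x⟫ = 0 := by
    intro x
    have h := hIsk (J x) x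
    rw [hIJa] at h
    have := hK0 x
    linarith
  have hKJ0 : ∀ x, ⟪K x, J x⟫ = 0 := by
    intro x
    have h := hJsk (K x) x
    rw [hJKa] at h
    have := hI0 x
    linarith
  have hIK0 : ∀ x, ⟪I x, K x⟫ = 0 := by
    intro x
    have h := hKsk (I x) x
    rw [hKIa] at h
    have := hJ0 x
    linarith
  have hIJ0 : ∀ x, ⟪I x, J x⟫ = 0 := by
    intro x
    have h := hJsk (I x) x
    rw [hJIa, inner_neg_left] at h
    have := hK0 x
    linarith
  have hJK0 : ∀ x, ⟪J x, K x⟫ = 0 := by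
    intro x
    have h := hKsk (J x) x
    rw [hKJa, inner_neg_left] at h
    have := hI0 x
    linarith
  have hKI0 : ∀ x, ⟪K x, I x⟫ = 0 := by
    intro x
    have h := hIsk (K x) x
    rw [hIKa, inner_neg_left] at h
    have := hJ0 x
    linarith
  -- curvature reformulations
  have hRm : ∀ x y z w, Rm x y z w = ⟪Rop x y z, w⟫ := fun x y z w => (hRop x y z w).symm
  have hRmp : ∀ x y z w, Rm x y z w = ⟪Rop z w x, y⟫ := fun x y z w => by
    rw [hpair x y z w]; exact (hRop z w x y).symm
  have hRm3add : ∀ x y z z' w, Rm x y (z + z') w = Rm x y z w + Rm x y z' w := by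
    intro x y z z' w
    rw [hRm x y (z+z') w, hRm x y z w, hRm x y z' w, map_add, inner_add_left]
  have hRm1add : ∀ x x' y z w, Rm (x + x') y z w = Rm x y z w + Rm x' y z w := by
    intro x x' y z w
    rw [hRmp (x+x') y z w, hRmp x y z w, hRmp x' y z w, map_add, inner_add_left]
  have hRm2neg : ∀ x y z w, Rm x (-y) z w = -Rm x y z w := by
    intro x y z w
    rw [hRmp x (-y) z w, hRmp x y z w, inner_neg_right]
  have hm2 : (2:ℝ) ≤ (m:ℝ) := by exact_mod_cast hm
  have hm4 : (4*(m:ℝ)) ≠ 0 := ne_of_gt (by linarith)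
  have h4m8 : (4*(m:ℝ)+8) ≠ 0 := ne_of_gt (by linarith)
  have h1e : ∀ i : Fin (4*m),
      ⟪(EuclideanSpace.single i 1 : EuclideanSpace ℝ (Fin (4*m))), EuclideanSpace.single i 1⟫
        = (1:ℝ) := by
    intro i
    rw [eucl_inner_single]
    simp [EuclideanSpace.single_apply]
  -- contracted sp(1) coefficients: 4m * a = 2 * trace-type sums
  have hBa : ∀ x y, 4*(m:ℝ) * a x y
      = 2 * ∑ i, Rm x y (EuclideanSpace.single i 1) (I (EuclideanSpace.single i 1)) := by
    intro x y
    have hpt : ∀ i : Fin (4*m),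
        ⟪Rop x y (J (EuclideanSpace.single i 1)), K (EuclideanSpace.single i 1)⟫
          + ⟪Rop x y (EuclideanSpace.single i 1), I (EuclideanSpace.single i 1)⟫ = a x y := by
      intro i
      have h := LinearMap.congr_fun (hsp x y).2.1 (EuclideanSpace.single i 1)
      simp only [LinearMap.sub_apply, LinearMap.comp_apply, LinearMap.smul_apply] at h
      have h2 : ⟪Rop x y (J (EuclideanSpace.single i 1))
            - J (Rop x y (EuclideanSpace.single i 1)), K (EuclideanSpace.single i 1)⟫
          = ⟪a x y • K (EuclideanSpace.single i 1)
            - c x y • I (EuclideanSpace.single i 1), K (EuclideanSpace.single i 1)⟫ := by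
        rw [h]
      rw [inner_sub_left, inner_sub_left, real_inner_smul_left, real_inner_smul_left,
        hgK, h1e i, hIK0] at h2
      have h3 := hJsk (Rop x y (EuclideanSpace.single i 1)) (K (EuclideanSpace.single i 1))
      rw [hJKa] at h3
      linarith
    have hsum : ∑ i : Fin (4*m),
        (⟪Rop x y (J (EuclideanSpace.single i 1)), K (EuclideanSpace.single i 1)⟫
          + ⟪Rop x y (EuclideanSpace.single i 1), I (EuclideanSpace.single i 1)⟫)
        = ∑ _i : Fin (4*m), a x y := Finset.sum_congr rfl fun i _ => hpt i
    rw [Finset.sum_add_distrib, Finset.sum_const, Finset.card_univ, Fintype.card_fin,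
      nsmul_eq_mul] at hsum
    have hswap := eucl_curl (Rop x y) J K I hKsk hIsk hJKa
    rw [hswap] at hsum
    have hR : ∑ i, ⟪Rop x y (EuclideanSpace.single i 1), I (EuclideanSpace.single i 1)⟫
        = ∑ i, Rm x y (EuclideanSpace.single i 1) (I (EuclideanSpace.single i 1)) :=
      Finset.sum_congr rfl fun i _ => hRop _ _ _ _
    rw [hR] at hsum
    push_cast at hsum
    linarith
  have hBb : ∀ x y, 4*(m:ℝ) * b x y
      = 2 * ∑ i, Rm x y (EuclideanSpace.single i 1) (J (EuclideanSpace.single i 1)) := by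
    intro x y
    have hpt : ∀ i : Fin (4*m),
        ⟪Rop x y (K (EuclideanSpace.single i 1)), I (EuclideanSpace.single i 1)⟫
          + ⟪Rop x y (EuclideanSpace.single i 1), J (EuclideanSpace.single i 1)⟫ = b x y := by
      intro i
      have h := LinearMap.congr_fun (hsp x y).2.2 (EuclideanSpace.single i 1)
      simp only [LinearMap.sub_apply, LinearMap.comp_apply, LinearMap.smul_apply] at h
      have h2 : ⟪Rop x y (K (EuclideanSpace.single i 1))
            - K (Rop x y (EuclideanSpace.single i 1)), I (EuclideanSpace.single i 1)⟫
          = ⟪b x y • I (EuclideanSpace.single i 1)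
            - a x y • J (EuclideanSpace.single i 1), I (EuclideanSpace.single i 1)⟫ := by
        rw [h]
      rw [inner_sub_left, inner_sub_left, real_inner_smul_left, real_inner_smul_left,
        hgI, h1e i, hJI0] at h2
      have h3 := hKsk (Rop x y (EuclideanSpace.single i 1)) (I (EuclideanSpace.single i 1))
      rw [hKIa] at h3
      linarith
    have hsum : ∑ i : Fin (4*m),
        (⟪Rop x y (K (EuclideanSpace.single i 1)), I (EuclideanSpace.single i 1)⟫
          + ⟪Rop x y (EuclideanSpace.single i 1), J (EuclideanSpace.single i 1)⟫)
        = ∑ _i : Fin (4*m), b x y := Finset.sum_congr rfl fun i _ => hpt i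
    rw [Finset.sum_add_distrib, Finset.sum_const, Finset.card_univ, Fintype.card_fin,
      nsmul_eq_mul] at hsum
    have hswap := eucl_curl (Rop x y) K I J hIsk hJsk hKIa
    rw [hswap] at hsum
    have hR : ∑ i, ⟪Rop x y (EuclideanSpace.single i 1), J (EuclideanSpace.single i 1)⟫
        = ∑ i, Rm x y (EuclideanSpace.single i 1) (J (EuclideanSpace.single i 1)) :=
      Finset.sum_congr rfl fun i _ => hRop _ _ _ _
    rw [hR] at hsum
    push_cast at hsum
    linarith
  have hBc : ∀ x y, 4*(m:ℝ) * c x y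
      = 2 * ∑ i, Rm x y (EuclideanSpace.single i 1) (K (EuclideanSpace.single i 1)) := by
    intro x y
    have hpt : ∀ i : Fin (4*m),
        ⟪Rop x y (I (EuclideanSpace.single i 1)), J (EuclideanSpace.single i 1)⟫
          + ⟪Rop x y (EuclideanSpace.single i 1), K (EuclideanSpace.single i 1)⟫ = c x y := by
      intro i
      have h := LinearMap.congr_fun (hsp x y).1 (EuclideanSpace.single i 1)
      simp only [LinearMap.sub_apply, LinearMap.comp_apply, LinearMap.smul_apply] at h
      have h2 : ⟪Rop x y (I (EuclideanSpace.single i 1))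
            - I (Rop x y (EuclideanSpace.single i 1)), J (EuclideanSpace.single i 1)⟫
          = ⟪c x y • J (EuclideanSpace.single i 1)
            - b x y • K (EuclideanSpace.single i 1), J (EuclideanSpace.single i 1)⟫ := by
        rw [h]
      rw [inner_sub_left, inner_sub_left, real_inner_smul_left, real_inner_smul_left,
        hgJ, h1e i, hKJ0] at h2
      have h3 := hIsk (Rop x y (EuclideanSpace.single i 1)) (J (EuclideanSpace.single i 1))
      rw [hIJa] at h3
      linarith
    have hsum : ∑ i : Fin (4*m),
        (⟪Rop x y (I (EuclideanSpace.single i 1)), J (EuclideanSpace.single i 1)⟫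
          + ⟪Rop x y (EuclideanSpace.single i 1), K (EuclideanSpace.single i 1)⟫)
        = ∑ _i : Fin (4*m), c x y := Finset.sum_congr rfl fun i _ => hpt i
    rw [Finset.sum_add_distrib, Finset.sum_const, Finset.card_univ, Fintype.card_fin,
      nsmul_eq_mul] at hsum
    have hswap := eucl_curl (Rop x y) I J K hJsk hKsk hIJa
    rw [hswap] at hsum
    have hR : ∑ i, ⟪Rop x y (EuclideanSpace.single i 1), K (EuclideanSpace.single i 1)⟫
        = ∑ i, Rm x y (EuclideanSpace.single i 1) (K (EuclideanSpace.single i 1)) :=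
      Finset.sum_congr rfl fun i _ => hRop _ _ _ _
    rw [hR] at hsum
    push_cast at hsum
    linarith
  -- antisymmetry and second-slot negation for a, b, c
  have hgen : ∀ (f : EuclideanSpace ℝ (Fin (4*m)) → EuclideanSpace ℝ (Fin (4*m)) → ℝ)
      (α : EuclideanSpace ℝ (Fin (4*m)) →ₗ[ℝ] EuclideanSpace ℝ (Fin (4*m))),
      (∀ x y, 4*(m:ℝ) * f x y
        = 2 * ∑ i, Rm x y (EuclideanSpace.single i 1) (α (EuclideanSpace.single i 1))) →
      (∀ x y, f y x = -f x y) ∧ (∀ x y, f x (-y) = -f x y) := by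
    intro f α hBf
    constructor
    · intro x y
      apply mul_left_cancel₀ hm4
      rw [hBf y x]
      have h1 : ∑ i, Rm y x (EuclideanSpace.single i 1) (α (EuclideanSpace.single i 1))
          = -∑ i, Rm x y (EuclideanSpace.single i 1) (α (EuclideanSpace.single i 1)) := by
        rw [← Finset.sum_neg_distrib]
        exact Finset.sum_congr rfl fun i _ => hanti1 y x _ _
      rw [h1]
      linear_combination hBf x y
    · intro x y
      apply mul_left_cancel₀ hm4
      rw [hBf x (-y)]
      have h1 : ∑ i, Rm x (-y) (EuclideanSpace.single i 1) (α (EuclideanSpace.single i 1))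
          = -∑ i, Rm x y (EuclideanSpace.single i 1) (α (EuclideanSpace.single i 1)) := by
        rw [← Finset.sum_neg_distrib]
        exact Finset.sum_congr rfl fun i _ => hRm2neg x y _ _
      rw [h1]
      linear_combination hBf x y
  obtain ⟨hfa, hna⟩ := hgen a I hBa
  obtain ⟨hfb, hnb⟩ := hgen b J hBb
  obtain ⟨hfc, hnc⟩ := hgen c K hBc
  -- resummation: a, b, c are linear in the second slot through the basis
  have hres : ∀ (f : EuclideanSpace ℝ (Fin (4*m)) → EuclideanSpace ℝ (Fin (4*m)) → ℝ)
      (α : EuclideanSpace ℝ (Fin (4*m)) →ₗ[ℝ] EuclideanSpace ℝ (Fin (4*m))),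
      (∀ x y, 4*(m:ℝ) * f x y
        = 2 * ∑ i, Rm x y (EuclideanSpace.single i 1) (α (EuclideanSpace.single i 1))) →
      ∀ (x z : EuclideanSpace ℝ (Fin (4*m))),
        ∑ i, f x (EuclideanSpace.single i 1) * z i = f x z := by
    intro f α hBf x z
    apply mul_left_cancel₀ hm4
    rw [Finset.mul_sum]
    have h1 : ∀ i : Fin (4*m), 4*(m:ℝ) * (f x (EuclideanSpace.single i 1) * z i)
        = 2 * ((∑ j, ⟪Rop (EuclideanSpace.single j 1) (α (EuclideanSpace.single j 1)) x,
            EuclideanSpace.single i 1⟫) * z i) := by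
      intro i
      have h := hBf x (EuclideanSpace.single i 1)
      have h2 : ∑ j, Rm x (EuclideanSpace.single i 1) (EuclideanSpace.single j 1)
            (α (EuclideanSpace.single j 1))
          = ∑ j, ⟪Rop (EuclideanSpace.single j 1) (α (EuclideanSpace.single j 1)) x,
            EuclideanSpace.single i 1⟫ :=
        Finset.sum_congr rfl fun j _ => hRmp _ _ _ _
      rw [h2] at h
      calc 4*(m:ℝ) * (f x (EuclideanSpace.single i 1) * z i)
          = (4*(m:ℝ) * f x (EuclideanSpace.single i 1)) * z i := by ring
        _ = (2 * ∑ j, ⟪Rop (EuclideanSpace.single j 1) (α (EuclideanSpace.single j 1)) x,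
              EuclideanSpace.single i 1⟫) * z i := by rw [h]
        _ = 2 * ((∑ j, ⟪Rop (EuclideanSpace.single j 1) (α (EuclideanSpace.single j 1)) x,
              EuclideanSpace.single i 1⟫) * z i) := by ring
    rw [Finset.sum_congr rfl fun i _ => h1 i]
    have h3 : ∑ i : Fin (4*m), 2 * ((∑ j, ⟪Rop (EuclideanSpace.single j 1)
          (α (EuclideanSpace.single j 1)) x, EuclideanSpace.single i 1⟫) * z i)
        = 2 * ∑ j, ⟪Rop (EuclideanSpace.single j 1) (α (EuclideanSpace.single j 1)) x, z⟫ := by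
      rw [← Finset.mul_sum]
      congr 1
      calc ∑ i : Fin (4*m), (∑ j, ⟪Rop (EuclideanSpace.single j 1)
            (α (EuclideanSpace.single j 1)) x, EuclideanSpace.single i 1⟫) * z i
          = ∑ i : Fin (4*m), ∑ j, ⟪Rop (EuclideanSpace.single j 1)
            (α (EuclideanSpace.single j 1)) x, EuclideanSpace.single i 1⟫ * z i := by
            refine Finset.sum_congr rfl fun i _ => ?_
            rw [Finset.sum_mul]
        _ = ∑ j, ∑ i : Fin (4*m), ⟪Rop (EuclideanSpace.single j 1)
            (α (EuclideanSpace.single j 1)) x, EuclideanSpace.single i 1⟫ * z i :=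
            Finset.sum_comm
        _ = ∑ j, ⟪Rop (EuclideanSpace.single j 1) (α (EuclideanSpace.single j 1)) x, z⟫ :=
            Finset.sum_congr rfl fun j _ => eucl_inner_sum _ z
    rw [h3, hBf x z]
    have h4 : ∑ j, Rm x z (EuclideanSpace.single j 1) (α (EuclideanSpace.single j 1))
        = ∑ j, ⟪Rop (EuclideanSpace.single j 1) (α (EuclideanSpace.single j 1)) x, z⟫ :=
      Finset.sum_congr rfl fun j _ => hRmp _ _ _ _
    rw [h4]
  have hresa := hres a I hBa
  have hresb := hres b J hBb
  have hresc := hres c K hBc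
  -- polarized Einstein condition
  have hRicB : ∀ (x w : EuclideanSpace ℝ (Fin (4*m))),
      ∑ i, Rm x (EuclideanSpace.single i 1) w (EuclideanSpace.single i 1)
        = 4*((m:ℝ)+2)*κ * ⟪x, w⟫ := by
    intro x w
    have hpt : ∀ i : Fin (4*m),
        Rm (x+w) (EuclideanSpace.single i 1) (x+w) (EuclideanSpace.single i 1)
          = Rm x (EuclideanSpace.single i 1) x (EuclideanSpace.single i 1)
            + Rm x (EuclideanSpace.single i 1) w (EuclideanSpace.single i 1)
            + Rm w (EuclideanSpace.single i 1) x (EuclideanSpace.single i 1)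
            + Rm w (EuclideanSpace.single i 1) w (EuclideanSpace.single i 1) := by
      intro i
      rw [hRm3add, hRm1add, hRm1add]
      ring
    have hxw := hEin (x + w)
    rw [Finset.sum_congr rfl fun i _ => hpt i] at hxw
    rw [Finset.sum_add_distrib, Finset.sum_add_distrib, Finset.sum_add_distrib] at hxw
    have hsym : ∑ i, Rm w (EuclideanSpace.single i 1) x (EuclideanSpace.single i 1)
        = ∑ i, Rm x (EuclideanSpace.single i 1) w (EuclideanSpace.single i 1) :=
      Finset.sum_congr rfl fun i _ => hpair _ _ _ _
    rw [hsym, hEin x, hEin w, norm_add_sq_real] at hxw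
    linear_combination hxw / 2
  -- mixed Ricci contractions
  have hRicI : ∀ (x y : EuclideanSpace ℝ (Fin (4*m))),
      ∑ i, Rm x (EuclideanSpace.single i 1) y (I (EuclideanSpace.single i 1))
        = -(4*((m:ℝ)+2)*κ * ⟪x, I y⟫) + c x (J y) - b x (K y) := by
    intro x y
    have hpt : ∀ i : Fin (4*m),
        Rm x (EuclideanSpace.single i 1) y (I (EuclideanSpace.single i 1))
          = -Rm x (EuclideanSpace.single i 1) (I y) (EuclideanSpace.single i 1)
            + c x (EuclideanSpace.single i 1) * (J y) i
            - b x (EuclideanSpace.single i 1) * (K y) i := by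
      intro i
      have h := LinearMap.congr_fun (hsp x (EuclideanSpace.single i 1)).1 y
      simp only [LinearMap.sub_apply, LinearMap.comp_apply, LinearMap.smul_apply] at h
      have h3 : I (Rop x (EuclideanSpace.single i 1) y)
          = Rop x (EuclideanSpace.single i 1) (I y)
            - (c x (EuclideanSpace.single i 1) • J y
              - b x (EuclideanSpace.single i 1) • K y) := by
        rw [← h]; abel
      have h2 : Rm x (EuclideanSpace.single i 1) y (I (EuclideanSpace.single i 1))
          = -⟪I (Rop x (EuclideanSpace.single i 1) y), EuclideanSpace.single i 1⟫ := by
        rw [hRm]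
        have h4 := hIsk (Rop x (EuclideanSpace.single i 1) y) (EuclideanSpace.single i 1)
        linarith
      rw [h2, h3, inner_sub_left, inner_sub_left, real_inner_smul_left, real_inner_smul_left,
        hRop, eucl_inner_single, eucl_inner_single]
      ring
    rw [Finset.sum_congr rfl fun i _ => hpt i]
    rw [Finset.sum_sub_distrib, Finset.sum_add_distrib, Finset.sum_neg_distrib]
    linear_combination (-1) * hRicB x (I y) + hresc x (J y) - hresb x (K y)
  have hRicJ : ∀ (x y : EuclideanSpace ℝ (Fin (4*m))),
      ∑ i, Rm x (EuclideanSpace.single i 1) y (J (EuclideanSpace.single i 1))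
        = -(4*((m:ℝ)+2)*κ * ⟪x, J y⟫) + a x (K y) - c x (I y) := by
    intro x y
    have hpt : ∀ i : Fin (4*m),
        Rm x (EuclideanSpace.single i 1) y (J (EuclideanSpace.single i 1))
          = -Rm x (EuclideanSpace.single i 1) (J y) (EuclideanSpace.single i 1)
            + a x (EuclideanSpace.single i 1) * (K y) i
            - c x (EuclideanSpace.single i 1) * (I y) i := by
      intro i
      have h := LinearMap.congr_fun (hsp x (EuclideanSpace.single i 1)).2.1 y
      simp only [LinearMap.sub_apply, LinearMap.comp_apply, LinearMap.smul_apply] at h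
      have h3 : J (Rop x (EuclideanSpace.single i 1) y)
          = Rop x (EuclideanSpace.single i 1) (J y)
            - (a x (EuclideanSpace.single i 1) • K y
              - c x (EuclideanSpace.single i 1) • I y) := by
        rw [← h]; abel
      have h2 : Rm x (EuclideanSpace.single i 1) y (J (EuclideanSpace.single i 1))
          = -⟪J (Rop x (EuclideanSpace.single i 1) y), EuclideanSpace.single i 1⟫ := by
        rw [hRm]
        have h4 := hJsk (Rop x (EuclideanSpace.single i 1) y) (EuclideanSpace.single i 1)
        linarith
      rw [h2, h3, inner_sub_left, inner_sub_left, real_inner_smul_left, real_inner_smul_left,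
        hRop, eucl_inner_single, eucl_inner_single]
      ring
    rw [Finset.sum_congr rfl fun i _ => hpt i]
    rw [Finset.sum_sub_distrib, Finset.sum_add_distrib, Finset.sum_neg_distrib]
    linear_combination (-1) * hRicB x (J y) + hresa x (K y) - hresc x (I y)
  have hRicK : ∀ (x y : EuclideanSpace ℝ (Fin (4*m))),
      ∑ i, Rm x (EuclideanSpace.single i 1) y (K (EuclideanSpace.single i 1))
        = -(4*((m:ℝ)+2)*κ * ⟪x, K y⟫) + b x (I y) - a x (J y) := by
    intro x y
    have hpt : ∀ i : Fin (4*m),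
        Rm x (EuclideanSpace.single i 1) y (K (EuclideanSpace.single i 1))
          = -Rm x (EuclideanSpace.single i 1) (K y) (EuclideanSpace.single i 1)
            + b x (EuclideanSpace.single i 1) * (I y) i
            - a x (EuclideanSpace.single i 1) * (J y) i := by
      intro i
      have h := LinearMap.congr_fun (hsp x (EuclideanSpace.single i 1)).2.2 y
      simp only [LinearMap.sub_apply, LinearMap.comp_apply, LinearMap.smul_apply] at h
      have h3 : K (Rop x (EuclideanSpace.single i 1) y)
          = Rop x (EuclideanSpace.single i 1) (K y)
            - (b x (EuclideanSpace.single i 1) • I y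
              - a x (EuclideanSpace.single i 1) • J y) := by
        rw [← h]; abel
      have h2 : Rm x (EuclideanSpace.single i 1) y (K (EuclideanSpace.single i 1))
          = -⟪K (Rop x (EuclideanSpace.single i 1) y), EuclideanSpace.single i 1⟫ := by
        rw [hRm]
        have h4 := hKsk (Rop x (EuclideanSpace.single i 1) y) (EuclideanSpace.single i 1)
        linarith
      rw [h2, h3, inner_sub_left, inner_sub_left, real_inner_smul_left, real_inner_smul_left,
        hRop, eucl_inner_single, eucl_inner_single]
      ring
    rw [Finset.sum_congr rfl fun i _ => hpt i]
    rw [Finset.sum_sub_distrib, Finset.sum_add_distrib, Finset.sum_neg_distrib]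
    linear_combination (-1) * hRicB x (K y) + hresb x (I y) - hresa x (J y)
  -- first Bianchi applied to the contracted sums
  have hPasym : ∀ (x y : EuclideanSpace ℝ (Fin (4*m)))
      (α : EuclideanSpace ℝ (Fin (4*m)) →ₗ[ℝ] EuclideanSpace ℝ (Fin (4*m))),
      ∑ i, Rm x y (EuclideanSpace.single i 1) (α (EuclideanSpace.single i 1))
        = ∑ i, Rm x (EuclideanSpace.single i 1) y (α (EuclideanSpace.single i 1))
          - ∑ i, Rm y (EuclideanSpace.single i 1) x (α (EuclideanSpace.single i 1)) := by
    intro x y α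
    rw [← Finset.sum_sub_distrib]
    refine Finset.sum_congr rfl fun i _ => ?_
    have h := hbianchi x y (EuclideanSpace.single i 1) (α (EuclideanSpace.single i 1))
    have h2 := hanti1 (EuclideanSpace.single i 1) x y (α (EuclideanSpace.single i 1))
    linarith
  -- the structural equations for a, b, c
  have hEa : ∀ x y, 4*(m:ℝ) * a x y = -16*((m:ℝ)+2)*κ*⟪x, I y⟫
      + 2*c x (J y) - 2*c y (J x) - 2*b x (K y) + 2*b y (K x) := by
    intro x y
    have h0 := hBa x y
    rw [hPasym x y I, hRicI x y, hRicI y x] at h0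
    have hyx : ⟪y, I x⟫ = -⟪x, I y⟫ := by rw [real_inner_comm]; exact hIsk x y
    rw [hyx] at h0
    linear_combination h0
  have hEb : ∀ x y, 4*(m:ℝ) * b x y = -16*((m:ℝ)+2)*κ*⟪x, J y⟫
      + 2*a x (K y) - 2*a y (K x) - 2*c x (I y) + 2*c y (I x) := by
    intro x y
    have h0 := hBb x y
    rw [hPasym x y J, hRicJ x y, hRicJ y x] at h0
    have hyx : ⟪y, J x⟫ = -⟪x, J y⟫ := by rw [real_inner_comm]; exact hJsk x y
    rw [hyx] at h0
    linear_combination h0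
  have hEc : ∀ x y, 4*(m:ℝ) * c x y = -16*((m:ℝ)+2)*κ*⟪x, K y⟫
      + 2*b x (I y) - 2*b y (I x) - 2*a x (J y) + 2*a y (J x) := by
    intro x y
    have h0 := hBc x y
    rw [hPasym x y K, hRicK x y, hRicK y x] at h0
    have hyx : ⟪y, K x⟫ = -⟪x, K y⟫ := by rw [real_inner_comm]; exact hKsk x y
    rw [hyx] at h0
    linear_combination h0
  -- now fix X and assemble
  intro X hX
  have E1 : 4*(m:ℝ) * a X (I X) = 16*((m:ℝ)+2)*κ*‖X‖^2
      - 2*c X (K X) - 2*c (I X) (J X) - 2*b X (J X) + 2*b (I X) (K X) := by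
    have h := hEa X (I X)
    rw [hII X, hJIa X, hKIa X] at h
    rw [inner_neg_right, real_inner_self_eq_norm_sq, hnc X (K X)] at h
    linear_combination h
  have E2 : 4*(m:ℝ) * b X (J X) = 16*((m:ℝ)+2)*κ*‖X‖^2
      - 2*a X (I X) - 2*a (J X) (K X) - 2*c X (K X) - 2*c (I X) (J X) := by
    have h := hEb X (J X)
    rw [hJJ X, hKJa X, hIJa X] at h
    rw [inner_neg_right, real_inner_self_eq_norm_sq, hna X (I X), hfc (I X) (J X)] at h
    linear_combination h
  have E3 : 4*(m:ℝ) * c X (K X) = 16*((m:ℝ)+2)*κ*‖X‖^2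
      - 2*b X (J X) + 2*b (I X) (K X) - 2*a X (I X) - 2*a (J X) (K X) := by
    have h := hEc X (K X)
    rw [hKK X, hIKa X, hJKa X] at h
    rw [inner_neg_right, real_inner_self_eq_norm_sq, hnb X (J X), hfb (I X) (K X),
      hfa (J X) (K X)] at h
    linear_combination h
  have E6 : 4*(m:ℝ) * a (J X) (K X) = 16*((m:ℝ)+2)*κ*‖X‖^2
      - 2*c (I X) (J X) - 2*c X (K X) - 2*b X (J X) + 2*b (I X) (K X) := by
    have h := hEa (J X) (K X)
    rw [hIKa X, hJKa X, hJJ X, hKK X, hKJa X] at h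
    rw [inner_neg_right, hgJ, real_inner_self_eq_norm_sq] at h
    rw [hfc (I X) (J X), hnc (K X) X, hfc X (K X), hnb (J X) X, hfb X (J X),
      hnb (K X) (I X), hfb (I X) (K X)] at h
    linear_combination h
  have E4 : 4*(m:ℝ) * b (I X) (K X) = -16*((m:ℝ)+2)*κ*‖X‖^2
      + 2*a X (I X) + 2*a (J X) (K X) + 2*c (I X) (J X) + 2*c X (K X) := by
    have h := hEb (I X) (K X)
    rw [hJKa X, hKK X, hKIa X, hIKa X, hII X] at h
    rw [hgI, real_inner_self_eq_norm_sq] at h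
    rw [hna (I X) X, hfa X (I X), hfa (J X) (K X), hnc (I X) (J X),
      hnc (K X) X, hfc X (K X)] at h
    linear_combination h
  have E5 : 4*(m:ℝ) * c (I X) (J X) = 16*((m:ℝ)+2)*κ*‖X‖^2
      + 2*b (I X) (K X) - 2*b X (J X) - 2*a X (I X) - 2*a (J X) (K X) := by
    have h := hEc (I X) (J X)
    rw [hKJa X, hIJa X, hII X, hJJ X, hJIa X] at h
    rw [inner_neg_right, hgI, real_inner_self_eq_norm_sq] at h
    rw [hnb (J X) X, hfb X (J X), hna (I X) X, hfa X (I X), hna (J X) (K X)] at h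
    linear_combination h
  have hup : a X (I X) = a (J X) (K X) := by
    apply mul_left_cancel₀ hm4
    linear_combination E1 - E6
  have hwr : c X (K X) = c (I X) (J X) := by
    apply mul_left_cancel₀ hm4
    linear_combination E3 - E5
  have hqv : b (I X) (K X) = -b X (J X) := by
    apply mul_left_cancel₀ hm4
    linear_combination E4 + E2
  have hS : a X (I X) + b X (J X) + c X (K X) = 12*κ*‖X‖^2 := by
    apply mul_left_cancel₀ h4m8
    linear_combination E1 + E2 + E3 + 4*hup + 4*hwr + 4*hqv
  -- the three sectional-sum identities
  have id1 : Rm X (I X) X (I X) + Rm X (I X) (J X) (K X) = a X (I X) * ‖X‖^2 := by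
    have h := LinearMap.congr_fun (hsp X (I X)).2.1 (J X)
    simp only [LinearMap.sub_apply, LinearMap.comp_apply, LinearMap.smul_apply] at h
    rw [hJJ X, hKJa X, hIJa X] at h
    have h2 : ⟪Rop X (I X) (-X) - J (Rop X (I X) (J X)), I X⟫
        = ⟪a X (I X) • -(I X) - c X (I X) • K X, I X⟫ := by rw [h]
    rw [inner_sub_left, inner_sub_left, real_inner_smul_left, real_inner_smul_left] at h2
    have p1 : ⟪Rop X (I X) (-X), I X⟫ = -Rm X (I X) X (I X) := by
      rw [map_neg, inner_neg_left, hRop]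
    have p2 : ⟪J (Rop X (I X) (J X)), I X⟫ = Rm X (I X) (J X) (K X) := by
      have h5 := hJsk (Rop X (I X) (J X)) (I X)
      rw [hJIa X, inner_neg_right, hRop] at h5
      linarith
    have p3 : ⟪-(I X), I X⟫ = -‖X‖^2 := by
      rw [inner_neg_left, hgI, real_inner_self_eq_norm_sq]
    rw [p1, p2, p3, hKI0 X] at h2
    linear_combination -h2
  have id2 : Rm X (J X) X (J X) + Rm X (J X) (K X) (I X) = b X (J X) * ‖X‖^2 := by
    have h := LinearMap.congr_fun (hsp X (J X)).2.2 (K X)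
    simp only [LinearMap.sub_apply, LinearMap.comp_apply, LinearMap.smul_apply] at h
    rw [hKK X, hIKa X, hJKa X] at h
    have h2 : ⟪Rop X (J X) (-X) - K (Rop X (J X) (K X)), J X⟫
        = ⟪b X (J X) • -(J X) - a X (J X) • I X, J X⟫ := by rw [h]
    rw [inner_sub_left, inner_sub_left, real_inner_smul_left, real_inner_smul_left] at h2
    have p1 : ⟪Rop X (J X) (-X), J X⟫ = -Rm X (J X) X (J X) := by
      rw [map_neg, inner_neg_left, hRop]
    have p2 : ⟪K (Rop X (J X) (K X)), J X⟫ = Rm X (J X) (K X) (I X) := by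
      have h5 := hKsk (Rop X (J X) (K X)) (J X)
      rw [hKJa X, inner_neg_right, hRop] at h5
      linarith
    have p3 : ⟪-(J X), J X⟫ = -‖X‖^2 := by
      rw [inner_neg_left, hgJ, real_inner_self_eq_norm_sq]
    rw [p1, p2, p3, hIJ0 X] at h2
    linear_combination -h2
  have id3 : Rm X (K X) X (K X) + Rm X (K X) (I X) (J X) = c X (K X) * ‖X‖^2 := by
    have h := LinearMap.congr_fun (hsp X (K X)).1 (I X)
    simp only [LinearMap.sub_apply, LinearMap.comp_apply, LinearMap.smul_apply] at h
    rw [hII X, hJIa X, hKIa X] at h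
    have h2 : ⟪Rop X (K X) (-X) - I (Rop X (K X) (I X)), K X⟫
        = ⟪c X (K X) • -(K X) - b X (K X) • J X, K X⟫ := by rw [h]
    rw [inner_sub_left, inner_sub_left, real_inner_smul_left, real_inner_smul_left] at h2
    have p1 : ⟪Rop X (K X) (-X), K X⟫ = -Rm X (K X) X (K X) := by
      rw [map_neg, inner_neg_left, hRop]
    have p2 : ⟪I (Rop X (K X) (I X)), K X⟫ = Rm X (K X) (I X) (J X) := by
      have h5 := hIsk (Rop X (K X) (I X)) (K X)
      rw [hIKa X, inner_neg_right, hRop] at h5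
      linarith
    have p3 : ⟪-(K X), K X⟫ = -‖X‖^2 := by
      rw [inner_neg_left, hgK, real_inner_self_eq_norm_sq]
    rw [p1, p2, p3, hJK0 X] at h2
    linear_combination -h2
  have hABC : Rm X (I X) (J X) (K X) + Rm X (J X) (K X) (I X) + Rm X (K X) (I X) (J X) = 0 := by
    have h := hbianchi X (I X) (J X) (K X)
    have h1 := hpair (I X) (J X) X (K X)
    have h2 := hanti1 (J X) X (I X) (K X)
    have h3 := hanti2 X (J X) (I X) (K X)
    linarith
  have hQ : Rm X (I X) X (I X) + Rm X (J X) X (J X) + Rm X (K X) X (K X)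
      = 12*κ*‖X‖^2*‖X‖^2 := by
    linear_combination id1 + id2 + id3 - hABC + ‖X‖^2 * hS
  have hX2 : ‖X‖^2 ≠ 0 := pow_ne_zero 2 (norm_ne_zero_iff.mpr hX)
  rw [hEin X, hQ, mul_div_assoc, div_self hX2, mul_one]
  ring
end
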